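/- arXiv:1907.07541 — 4 statements merged into one kernel-verified Lean document; each statement's English description precedes it below -/
import Mathlib

section
/- Let k ≥ 3. Each of the following k-families H satisfies λ₁(H) + λ₂(H) ≤ (k−1)·f_{k−1}(H): (a) the complete k-family whose facets are all k-element subsets of a fixed (k+1)-element vertex set; (b) the disjoint union of two star k-families with two facets each, where the two star families use disjoint vertex sets; (c) the disjoint union of a star k-family with three facets and a k-family with a single facet, on disjoint vertex sets. -/
/-- Signed boundary matrix of a `k`-family `S` on vertex set `Fin n`: rows are indexed
by the `(k-1)`-element subsets, columns by the facets; the `(R,F)` entry is `(-1)^j`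
if `R ⊆ F` and the unique element of `F \ R` is the `(j+1)`-st smallest element of
`F`, and `0` otherwise. -/
noncomputable def bdry (n k : ℕ) (S : Finset (Finset (Fin n))) :
    Matrix {R : Finset (Fin n) // R.card = k - 1} {F : Finset (Fin n) // F ∈ S} ℝ :=
  fun R F =>
    if R.1 ⊆ F.1 then
      ∑ x ∈ F.1 \ R.1, (-1 : ℝ) ^ (F.1.filter (fun y => y < x)).card
    else 0

/-- The Laplacian `∂ ∂ᵀ` of a `k`-family. -/
noncomputable def simpLap (n k : ℕ) (S : Finset (Finset (Fin n))) :
    Matrix {R : Finset (Fin n) // R.card = k - 1} {R : Finset (Fin n) // R.card = k - 1} ℝ :=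
  bdry n k S * (bdry n k S).conjTranspose

lemma simpLap_isHermitian (n k : ℕ) (S : Finset (Finset (Fin n))) :
    (simpLap n k S).IsHermitian :=
  Matrix.isHermitian_mul_conjTranspose_self _

/-- Sum of the `t` largest eigenvalues (with multiplicity) of a Hermitian real matrix. -/
noncomputable def topEigSum {m : Type} [Fintype m] [DecidableEq m]
    {A : Matrix m m ℝ} (hA : A.IsHermitian) (t : ℕ) : ℝ :=
  ((((Finset.univ.val.map hA.eigenvalues)).sort (· ≥ ·)).take t).sum

/-- The `t`-th generalized Brouwer inequality for a `k`-family `S`: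
`λ₁(S) + ⋯ + λ_t(S) ≤ (k-1)·f_{k-1}(S) + C(t+k-1, k)`. -/
noncomputable def GenBrouwerIneq (n k : ℕ) (S : Finset (Finset (Fin n))) (t : ℕ) : Prop :=
  topEigSum (simpLap_isHermitian n k S) t ≤
    ((k : ℝ) - 1) * S.card + ((t + k - 1).choose k : ℝ)


noncomputable def topEigSum' {m : Type} [Fintype m] [DecidableEq m]
    {A : Matrix m m ℝ} (hA : A.IsHermitian) (t : ℕ) : ℝ :=
  ((((Finset.univ.val.map hA.eigenvalues)).sort (· ≥ ·)).take t).sum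

private lemma multiset_exists_of_le_map {α β : Type*} [DecidableEq α] [DecidableEq β] {f : α → β} :
    ∀ {t : Multiset β} {s : Multiset α}, t ≤ s.map f → ∃ u, u ≤ s ∧ u.map f = t := by
  intro t
  induction t using Multiset.induction_on with
  | empty => exact fun _ => ⟨0, zero_le, rfl⟩
  | cons a t ih =>
    intro s h
    have ha : a ∈ s.map f := Multiset.mem_of_le h (Multiset.mem_cons_self a t)
    obtain ⟨x, hx, rfl⟩ := Multiset.mem_map.1 ha
    have ht : t ≤ (s.erase x).map f := by
      have h1 : t ≤ (s.map f).erase (f x) := by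
        have := Multiset.erase_le_erase (f x) h
        rwa [Multiset.erase_cons_head] at this
      have h2 : (s.map f).erase (f x) = (s.erase x).map f := by
        conv_lhs => rw [← Multiset.cons_erase hx]
        rw [Multiset.map_cons, Multiset.erase_cons_head]
      rwa [h2] at h1
    obtain ⟨u, hu, hmap⟩ := ih ht
    refine ⟨x ::ₘ u, ?_, by rw [Multiset.map_cons, hmap]⟩
    calc x ::ₘ u ≤ x ::ₘ s.erase x := Multiset.cons_le_cons x hu
    _ = s := Multiset.cons_erase hx

lemma topEigSum'_exists {m : Type} [Fintype m] [DecidableEq m] {A : Matrix m m ℝ}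
    (hA : A.IsHermitian) (t : ℕ) :
    ∃ s : Finset m, s.card ≤ t ∧ topEigSum' hA t = ∑ i ∈ s, hA.eigenvalues i := by
  set l := (Finset.univ.val.map hA.eigenvalues).sort (· ≥ ·) with hl
  have h1 : (↑(l.take t) : Multiset ℝ) ≤ Finset.univ.val.map hA.eigenvalues := by
    conv_rhs => rw [← Multiset.sort_eq (Finset.univ.val.map hA.eigenvalues) (· ≥ ·)]
    exact (l.take_sublist t).subperm
  obtain ⟨u, hu, hmap⟩ := multiset_exists_of_le_map h1
  have hnodup : u.Nodup := Multiset.nodup_of_le hu Finset.univ.nodup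
  refine ⟨⟨u, hnodup⟩, ?_, ?_⟩
  · have : Multiset.card u = (l.take t).length := by
      rw [← Multiset.card_map hA.eigenvalues u, hmap]; rfl
    simpa [this] using (List.length_take t l) ▸ min_le_left t l.length
  · show _ = (u.map hA.eigenvalues).sum
    rw [hmap]
    rfl

open Matrix

lemma euclid_dot {m : Type} [Fintype m] (x y : EuclideanSpace ℝ m) :
    (⇑x : m → ℝ) ⬝ᵥ (⇑y : m → ℝ) = (inner ℝ x y : ℝ) := by
  rw [PiLp.inner_apply]
  simp only [RCLike.inner_apply, conj_trivial]
  exact Finset.sum_congr rfl fun i _ => mul_comm _ _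

lemma eigenvector_dot_self {m : Type} [Fintype m] [DecidableEq m] {A : Matrix m m ℝ}
    (hA : A.IsHermitian) (i : m) :
    (⇑(hA.eigenvectorBasis i) : m → ℝ) ⬝ᵥ ⇑(hA.eigenvectorBasis i) = 1 := by
  rw [euclid_dot, real_inner_self_eq_norm_sq, hA.eigenvectorBasis.orthonormal.1 i]
  norm_num

lemma eigenvector_dot_other {m : Type} [Fintype m] [DecidableEq m] {A : Matrix m m ℝ}
    (hA : A.IsHermitian) {i j : m} (hij : i ≠ j) :
    (⇑(hA.eigenvectorBasis i) : m → ℝ) ⬝ᵥ ⇑(hA.eigenvectorBasis j) = 0 := by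
  rw [euclid_dot]
  exact hA.eigenvectorBasis.orthonormal.2 hij

lemma eigenvalue_le_of_quad {m : Type} [Fintype m] [DecidableEq m] {A : Matrix m m ℝ}
    (hA : A.IsHermitian) {c : ℝ}
    (h : ∀ x : m → ℝ, x ⬝ᵥ (A *ᵥ x) ≤ c * (x ⬝ᵥ x)) (i : m) : hA.eigenvalues i ≤ c := by
  set u : m → ℝ := ⇑(hA.eigenvectorBasis i) with hu
  have hnorm : u ⬝ᵥ u = 1 := eigenvector_dot_self hA i
  have hmul : A *ᵥ u = hA.eigenvalues i • u := hA.mulVec_eigenvectorBasis i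
  have key : u ⬝ᵥ (A *ᵥ u) = hA.eigenvalues i := by
    rw [hmul, dotProduct_smul, hnorm]; simp
  have h2 := h u
  rw [key, hnorm, mul_one] at h2
  exact h2

lemma eigenvalue_pair_le {m : Type} [Fintype m] [DecidableEq m] {A : Matrix m m ℝ}
    (hA : A.IsHermitian) {c : ℝ} (v : m → ℝ)
    (h : ∀ x : m → ℝ, x ⬝ᵥ v = 0 → x ⬝ᵥ (A *ᵥ x) ≤ c * (x ⬝ᵥ x))
    {i j : m} (hij : i ≠ j) : hA.eigenvalues i ≤ c ∨ hA.eigenvalues j ≤ c := by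
  by_contra hcon
  push_neg at hcon
  obtain ⟨hi, hj⟩ := hcon
  set ui : m → ℝ := ⇑(hA.eigenvectorBasis i) with hui
  set uj : m → ℝ := ⇑(hA.eigenvectorBasis j) with huj
  have hii : ui ⬝ᵥ ui = 1 := eigenvector_dot_self hA i
  have hjj : uj ⬝ᵥ uj = 1 := eigenvector_dot_self hA j
  have hijd : ui ⬝ᵥ uj = 0 := eigenvector_dot_other hA hij
  have hjid : uj ⬝ᵥ ui = 0 := by rw [dotProduct_comm]; exact hijd
  have hmuli : A *ᵥ ui = hA.eigenvalues i • ui := hA.mulVec_eigenvectorBasis i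
  have hmulj : A *ᵥ uj = hA.eigenvalues j • uj := hA.mulVec_eigenvectorBasis j
  set α : ℝ := uj ⬝ᵥ v with hα
  set β : ℝ := ui ⬝ᵥ v with hβ
  by_cases hz : α = 0 ∧ β = 0
  · have := h ui (by rw [← hβ, hz.2])
    have key : ui ⬝ᵥ (A *ᵥ ui) = hA.eigenvalues i := by
      rw [hmuli, dotProduct_smul, hii]; simp
    rw [key, hii, mul_one] at this
    exact absurd this (not_le.2 hi)
  · set x : m → ℝ := α • ui - β • uj with hx
    have hxv : x ⬝ᵥ v = 0 := by
      rw [hx, sub_dotProduct, smul_dotProduct, smul_dotProduct, ← hα, ← hβ,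
        smul_eq_mul, smul_eq_mul]
      ring
    have hAx : A *ᵥ x = (hA.eigenvalues i * α) • ui - (hA.eigenvalues j * β) • uj := by
      rw [hx, mulVec_sub, mulVec_smul, mulVec_smul, hmuli, hmulj, smul_smul, smul_smul,
        mul_comm α _, mul_comm β _]
    have hq : x ⬝ᵥ (A *ᵥ x) = hA.eigenvalues i * α ^ 2 + hA.eigenvalues j * β ^ 2 := by
      rw [hAx, hx]
      simp only [sub_dotProduct, dotProduct_sub, smul_dotProduct, dotProduct_smul,
        smul_eq_mul, hii, hjj, hijd, hjid]
      ring
    have hxx : x ⬝ᵥ x = α ^ 2 + β ^ 2 := by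
      rw [hx]
      simp only [sub_dotProduct, dotProduct_sub, smul_dotProduct, dotProduct_smul,
        smul_eq_mul, hii, hjj, hijd, hjid]
      ring
    have hb := h x hxv
    rw [hq, hxx] at hb
    have h1 : 0 ≤ (hA.eigenvalues i - c) * α ^ 2 :=
      mul_nonneg (by linarith) (sq_nonneg α)
    have h2 : 0 ≤ (hA.eigenvalues j - c) * β ^ 2 :=
      mul_nonneg (by linarith) (sq_nonneg β)
    have hA0 : (hA.eigenvalues i - c) * α ^ 2 = 0 := by nlinarith
    have hB0 : (hA.eigenvalues j - c) * β ^ 2 = 0 := by nlinarith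
    have hα0 : α ^ 2 = 0 := by
      rcases mul_eq_zero.1 hA0 with h' | h'
      · exact absurd h' (by intro hh; linarith)
      · exact h'
    have hβ0 : β ^ 2 = 0 := by
      rcases mul_eq_zero.1 hB0 with h' | h'
      · exact absurd h' (by intro hh; linarith)
      · exact h'
    have : α = 0 ∧ β = 0 := ⟨pow_eq_zero_iff (by norm_num) |>.1 hα0,
      pow_eq_zero_iff (by norm_num) |>.1 hβ0⟩
    exact hz this

lemma quad_as_norm {ι κ : Type} [Fintype ι] [Fintype κ] (B : Matrix ι κ ℝ) (x : ι → ℝ) :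
    x ⬝ᵥ ((B * Bᴴ) *ᵥ x) = (Bᴴ *ᵥ x) ⬝ᵥ (Bᴴ *ᵥ x) := by
  have hBH : Bᴴ = Bᵀ := by
    ext i j; simp [Matrix.conjTranspose_apply]
  rw [← mulVec_mulVec, dotProduct_mulVec, hBH, mulVec_transpose]

lemma dual_bound {ι κ : Type} [Fintype ι] [Fintype κ] (B : Matrix ι κ ℝ) {c : ℝ} (hc : 0 ≤ c)
    (hK : ∀ y : κ → ℝ, (B *ᵥ y) ⬝ᵥ (B *ᵥ y) ≤ c * (y ⬝ᵥ y)) (x : ι → ℝ) :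
    x ⬝ᵥ ((B * Bᴴ) *ᵥ x) ≤ c * (x ⬝ᵥ x) := by
  have hBH : Bᴴ = Bᵀ := by ext i j; simp [Matrix.conjTranspose_apply]
  set t : κ → ℝ := Bᴴ *ᵥ x with ht
  have key : x ⬝ᵥ ((B * Bᴴ) *ᵥ x) = t ⬝ᵥ t := quad_as_norm B x
  have htt : (0:ℝ) ≤ t ⬝ᵥ t := Finset.sum_nonneg fun i _ => mul_self_nonneg _
  have hxx : (0:ℝ) ≤ x ⬝ᵥ x := Finset.sum_nonneg fun i _ => mul_self_nonneg _
  have h2 : t ⬝ᵥ t = x ⬝ᵥ (B *ᵥ t) := by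
    rw [dotProduct_mulVec x B t]
    congr 1
    rw [ht, hBH, mulVec_transpose]
  have hcs : (x ⬝ᵥ (B *ᵥ t)) ^ 2 ≤ (x ⬝ᵥ x) * ((B *ᵥ t) ⬝ᵥ (B *ᵥ t)) := by
    have := Finset.sum_mul_sq_le_sq_mul_sq Finset.univ x (B *ᵥ t)
    simpa [dotProduct, pow_two] using this
  have hKt := hK t
  rw [key]
  rcases eq_or_lt_of_le htt with h0 | hpos
  · rw [← h0]; exact mul_nonneg hc hxx
  · have h4 : (t ⬝ᵥ t) * (t ⬝ᵥ t) ≤ (c * (x ⬝ᵥ x)) * (t ⬝ᵥ t) := by nlinarith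
    exact le_of_mul_le_mul_right h4 hpos

open Matrix

noncomputable def bdryVal {n : ℕ} (R F : Finset (Fin n)) : ℝ :=
  if R ⊆ F then ∑ x ∈ F \ R, (-1 : ℝ) ^ (F.filter (fun y => y < x)).card else 0

lemma bdryVal_zero {n : ℕ} {R F : Finset (Fin n)} (h : ¬ R ⊆ F) : bdryVal R F = 0 :=
  if_neg h

lemma bdryVal_mul_self {n k : ℕ} (hk : 1 ≤ k) {R F : Finset (Fin n)}
    (hR : R.card = k - 1) (hF : F.card = k) (hsub : R ⊆ F) :
    bdryVal R F * bdryVal R F = 1 := by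
  have hcard : (F \ R).card = 1 := by rw [Finset.card_sdiff_of_subset hsub, hR, hF]; omega
  obtain ⟨z, hz⟩ := Finset.card_eq_one.1 hcard
  rw [bdryVal, if_pos hsub, hz, Finset.sum_singleton, ← pow_add]
  exact Even.neg_one_pow ⟨_, rfl⟩

noncomputable def KE (n k : ℕ) (v w : Finset (Fin n)) : ℝ :=
  ∑ R : {R : Finset (Fin n) // R.card = k - 1}, bdryVal R.1 v * bdryVal R.1 w

lemma KE_diag {n k : ℕ} (hk : 1 ≤ k) {F : Finset (Fin n)} (hF : F.card = k) :
    KE n k F F = k := by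
  rw [KE]
  rw [Finset.sum_congr rfl (fun (R : {R : Finset (Fin n) // R.card = k - 1}) _ => by
    by_cases h : R.1 ⊆ F
    · rw [show bdryVal R.1 F * bdryVal R.1 F = if R.1 ⊆ F then 1 else 0 by
        rw [if_pos h]; exact bdryVal_mul_self hk R.2 hF h]
    · rw [show bdryVal R.1 F * bdryVal R.1 F = if R.1 ⊆ F then 1 else 0 by
        rw [if_neg h, bdryVal_zero h, mul_zero]])]
  rw [Finset.sum_boole]
  have hcard : (Finset.univ.filter
      fun R : {R : Finset (Fin n) // R.card = k - 1} => R.1 ⊆ F).card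
      = (F.powersetCard (k - 1)).card := by
    apply Finset.card_bij (fun R _ => R.1)
    · intro R hR; rw [Finset.mem_powersetCard]; exact ⟨(Finset.mem_filter.1 hR).2, R.2⟩
    · intro R _ R' _ h; exact Subtype.ext h
    · intro R hR
      obtain ⟨hsub, hcard⟩ := Finset.mem_powersetCard.1 hR
      exact ⟨⟨R, hcard⟩, Finset.mem_filter.2 ⟨Finset.mem_univ _, hsub⟩, rfl⟩
  rw [hcard, Finset.card_powersetCard, hF, Nat.choose_symm hk, Nat.choose_one_right]

lemma KE_single {n k : ℕ} {F G R₀ : Finset (Fin n)} (hR₀ : R₀.card = k - 1)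
    (huniq : ∀ R : Finset (Fin n), R.card = k - 1 → R ⊆ F → R ⊆ G → R = R₀) :
    KE n k F G = bdryVal R₀ F * bdryVal R₀ G := by
  rw [KE]
  apply Finset.sum_eq_single_of_mem (⟨R₀, hR₀⟩ : {R : Finset (Fin n) // R.card = k - 1})
    (Finset.mem_univ _)
  intro R _ hne
  by_cases h1 : R.1 ⊆ F
  · by_cases h2 : R.1 ⊆ G
    · exact absurd (Subtype.ext (huniq R.1 R.2 h1 h2)) hne
    · rw [bdryVal_zero h2, mul_zero]
  · rw [bdryVal_zero h1, zero_mul]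

lemma KE_zero {n k : ℕ} {F G : Finset (Fin n)}
    (hno : ∀ R : Finset (Fin n), R.card = k - 1 → R ⊆ F → R ⊆ G → False) :
    KE n k F G = 0 := by
  rw [KE]
  apply Finset.sum_eq_zero
  intro R _
  by_cases h1 : R.1 ⊆ F
  · by_cases h2 : R.1 ⊆ G
    · exact (hno R.1 R.2 h1 h2).elim
    · rw [bdryVal_zero h2, mul_zero]
  · rw [bdryVal_zero h1, zero_mul]

lemma mulVec_dot_expand (n k : ℕ) (S : Finset (Finset (Fin n))) (y : {F // F ∈ S} → ℝ) :
    (bdry n k S *ᵥ y) ⬝ᵥ (bdry n k S *ᵥ y)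
      = ∑ F : {F // F ∈ S}, ∑ G : {F // F ∈ S}, y F * y G * KE n k F.1 G.1 := by
  simp only [Matrix.mulVec, dotProduct, KE]
  rw [Finset.sum_congr rfl fun R _ => Finset.sum_mul_sum _ _ _ _]
  rw [Finset.sum_comm]
  refine Finset.sum_congr rfl fun F _ => ?_
  rw [Finset.sum_comm]
  refine Finset.sum_congr rfl fun G _ => ?_
  rw [Finset.mul_sum]
  refine Finset.sum_congr rfl fun R _ => ?_
  show (bdry n k S R F * y F) * (bdry n k S R G * y G)
      = y F * y G * (bdryVal R.1 F.1 * bdryVal R.1 G.1)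
  show (bdryVal R.1 F.1 * y F) * (bdryVal R.1 G.1 * y G)
      = y F * y G * (bdryVal R.1 F.1 * bdryVal R.1 G.1)
  ring

lemma subtype_double_sum {n : ℕ} (S : Finset (Finset (Fin n)))
    (K : Finset (Fin n) → Finset (Fin n) → ℝ) (c : ℝ)
    (h : ∀ Y : Finset (Fin n) → ℝ,
      ∑ F ∈ S, ∑ G ∈ S, Y F * Y G * K F G ≤ c * ∑ F ∈ S, (Y F) ^ 2)
    (y : {F // F ∈ S} → ℝ) :
    ∑ F : {F // F ∈ S}, ∑ G : {F // F ∈ S}, y F * y G * K F.1 G.1 ≤ c * (y ⬝ᵥ y) := by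
  classical
  set Y : Finset (Fin n) → ℝ := fun F => if h : F ∈ S then y ⟨F, h⟩ else 0 with hY
  have hyY : ∀ F : {F // F ∈ S}, y F = Y F.1 := by
    intro F
    rw [hY]
    simp only
    rw [dif_pos F.2]
  have h1 : ∑ F : {F // F ∈ S}, ∑ G : {F // F ∈ S}, y F * y G * K F.1 G.1
      = ∑ F ∈ S, ∑ G ∈ S, Y F * Y G * K F G := by
    rw [← Finset.sum_coe_sort S (fun F => ∑ G ∈ S, Y F * Y G * K F G)]
    refine Finset.sum_congr rfl fun F _ => ?_
    rw [← Finset.sum_coe_sort S (fun G => Y F.1 * Y G * K F.1 G)]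
    exact Finset.sum_congr rfl fun G _ => by rw [hyY F, hyY G]
  have h2 : y ⬝ᵥ y = ∑ F ∈ S, (Y F) ^ 2 := by
    rw [← Finset.sum_coe_sort S (fun F => (Y F) ^ 2)]
    simp only [dotProduct]
    exact Finset.sum_congr rfl fun F _ => by rw [hyY F, pow_two]
  rw [h1, h2]
  exact h Y

-- ===== primed (row-deleted) version =====

noncomputable def bdryVal' {n : ℕ} (R₀ R F : Finset (Fin n)) : ℝ :=
  if R = R₀ then 0 else bdryVal R F

noncomputable def KE' (n k : ℕ) (R₀ v w : Finset (Fin n)) : ℝ :=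
  ∑ R : {R : Finset (Fin n) // R.card = k - 1}, bdryVal' R₀ R.1 v * bdryVal' R₀ R.1 w

noncomputable def bdry' (n k : ℕ) (S : Finset (Finset (Fin n))) (R₀ : Finset (Fin n)) :
    Matrix {R : Finset (Fin n) // R.card = k - 1} {F : Finset (Fin n) // F ∈ S} ℝ :=
  fun R F => bdryVal' R₀ R.1 F.1

lemma bdryVal'_zero {n : ℕ} {R₀ R F : Finset (Fin n)} (h : ¬ R ⊆ F) :
    bdryVal' R₀ R F = 0 := by
  rw [bdryVal']
  by_cases h' : R = R₀
  · rw [if_pos h']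
  · rw [if_neg h', bdryVal_zero h]

lemma mulVec_dot_expand' (n k : ℕ) (S : Finset (Finset (Fin n))) (R₀ : Finset (Fin n))
    (y : {F // F ∈ S} → ℝ) :
    (bdry' n k S R₀ *ᵥ y) ⬝ᵥ (bdry' n k S R₀ *ᵥ y)
      = ∑ F : {F // F ∈ S}, ∑ G : {F // F ∈ S}, y F * y G * KE' n k R₀ F.1 G.1 := by
  simp only [Matrix.mulVec, dotProduct, KE']
  rw [Finset.sum_congr rfl fun R _ => Finset.sum_mul_sum _ _ _ _]
  rw [Finset.sum_comm]
  refine Finset.sum_congr rfl fun F _ => ?_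
  rw [Finset.sum_comm]
  refine Finset.sum_congr rfl fun G _ => ?_
  rw [Finset.mul_sum]
  refine Finset.sum_congr rfl fun R _ => ?_
  show (bdryVal' R₀ R.1 F.1 * y F) * (bdryVal' R₀ R.1 G.1 * y G)
      = y F * y G * (bdryVal' R₀ R.1 F.1 * bdryVal' R₀ R.1 G.1)
  ring

lemma KE'_diag_present {n k : ℕ} (hk : 1 ≤ k) {F R₀ : Finset (Fin n)}
    (hR₀ : R₀.card = k - 1) (hF : F.card = k) (hsub : R₀ ⊆ F) :
    KE' n k R₀ F F = (k : ℝ) - 1 := by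
  have hdiff : KE n k F F - KE' n k R₀ F F = 1 := by
    rw [KE, KE', ← Finset.sum_sub_distrib]
    rw [Finset.sum_eq_single_of_mem (⟨R₀, hR₀⟩ : {R : Finset (Fin n) // R.card = k - 1})
      (Finset.mem_univ _)]
    · show bdryVal R₀ F * bdryVal R₀ F - bdryVal' R₀ R₀ F * bdryVal' R₀ R₀ F = 1
      rw [bdryVal', if_pos rfl, mul_zero, sub_zero]
      exact bdryVal_mul_self hk hR₀ hF hsub
    · intro R _ hne
      have hR : R.1 ≠ R₀ := fun hh => hne (Subtype.ext hh)
      show bdryVal R.1 F * bdryVal R.1 F - bdryVal' R₀ R.1 F * bdryVal' R₀ R.1 F = 0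
      rw [bdryVal', if_neg hR, sub_self]
  have := KE_diag (n := n) hk hF
  linarith

lemma KE'_diag_absent {n k : ℕ} (hk : 1 ≤ k) {F R₀ : Finset (Fin n)}
    (hF : F.card = k) (hnsub : ¬ R₀ ⊆ F) :
    KE' n k R₀ F F = (k : ℝ) := by
  have heq : KE' n k R₀ F F = KE n k F F := by
    rw [KE, KE']
    refine Finset.sum_congr rfl fun R _ => ?_
    by_cases h : R.1 = R₀
    · rw [bdryVal', if_pos h, h, bdryVal_zero hnsub]
    · rw [bdryVal', if_neg h]
  rw [heq, KE_diag hk hF]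

lemma KE'_offdiag_zero {n k : ℕ} {F G R₀ : Finset (Fin n)}
    (huniq : ∀ R : Finset (Fin n), R.card = k - 1 → R ⊆ F → R ⊆ G → R = R₀) :
    KE' n k R₀ F G = 0 := by
  rw [KE']
  apply Finset.sum_eq_zero
  intro R _
  by_cases h0 : R.1 = R₀
  · rw [bdryVal', if_pos h0, zero_mul]
  · by_cases h1 : R.1 ⊆ F
    · by_cases h2 : R.1 ⊆ G
      · exact absurd (huniq R.1 R.2 h1 h2) h0
      · rw [bdryVal'_zero h2, mul_zero]
    · rw [bdryVal'_zero h1, zero_mul]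

-- ===== bridges =====

lemma simpLap_quad_bound (n k : ℕ) (S : Finset (Finset (Fin n))) {c : ℝ} (hc : 0 ≤ c)
    (h : ∀ Y : Finset (Fin n) → ℝ,
      ∑ F ∈ S, ∑ G ∈ S, Y F * Y G * KE n k F G ≤ c * ∑ F ∈ S, (Y F) ^ 2)
    (x : {R : Finset (Fin n) // R.card = k - 1} → ℝ) :
    x ⬝ᵥ (simpLap n k S *ᵥ x) ≤ c * (x ⬝ᵥ x) := by
  have := dual_bound (bdry n k S) hc (fun y => by
    rw [mulVec_dot_expand]
    exact subtype_double_sum S (KE n k) c h y) x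
  exact this

lemma simpLap_quad_bound' (n k : ℕ) (S : Finset (Finset (Fin n))) (R₀ : Finset (Fin n))
    (hR₀ : R₀.card = k - 1) {c : ℝ} (hc : 0 ≤ c)
    (h : ∀ Y : Finset (Fin n) → ℝ,
      ∑ F ∈ S, ∑ G ∈ S, Y F * Y G * KE' n k R₀ F G ≤ c * ∑ F ∈ S, (Y F) ^ 2)
    (x : {R : Finset (Fin n) // R.card = k - 1} → ℝ)
    (hx0 : x ⟨R₀, hR₀⟩ = 0) :
    x ⬝ᵥ (simpLap n k S *ᵥ x) ≤ c * (x ⬝ᵥ x) := by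
  have heq : (bdry n k S)ᴴ *ᵥ x = (bdry' n k S R₀)ᴴ *ᵥ x := by
    funext F
    simp only [Matrix.mulVec, dotProduct, Matrix.conjTranspose_apply, star_trivial]
    refine Finset.sum_congr rfl fun R _ => ?_
    by_cases hR : R = (⟨R₀, hR₀⟩ : {R : Finset (Fin n) // R.card = k - 1})
    · subst hR; rw [hx0, mul_zero, mul_zero]
    · have hv : R.1 ≠ R₀ := fun hh => hR (Subtype.ext hh)
      show bdryVal R.1 F.1 * x R = bdryVal' R₀ R.1 F.1 * x R
      rw [bdryVal', if_neg hv]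
  have key : x ⬝ᵥ (simpLap n k S *ᵥ x)
      = x ⬝ᵥ ((bdry' n k S R₀ * (bdry' n k S R₀)ᴴ) *ᵥ x) := by
    rw [show simpLap n k S = bdry n k S * (bdry n k S)ᴴ from rfl]
    rw [quad_as_norm, quad_as_norm, heq]
  rw [key]
  exact dual_bound (bdry' n k S R₀) hc (fun y => by
    rw [mulVec_dot_expand']
    exact subtype_double_sum S (KE' n k R₀) c h y) x

lemma topEigSum_eq' {m : Type} [Fintype m] [DecidableEq m]
    {A : Matrix m m ℝ} (hA : A.IsHermitian) (t : ℕ) : topEigSum hA t = topEigSum' hA t := rfl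

lemma topEig2_le (n k : ℕ) (S : Finset (Finset (Fin n))) {c₁ c₂ M : ℝ}
    (hA : (simpLap n k S).IsHermitian)
    (h1 : ∀ x, x ⬝ᵥ (simpLap n k S *ᵥ x) ≤ c₁ * (x ⬝ᵥ x))
    (h2 : ∃ v, ∀ x, x ⬝ᵥ v = 0 → x ⬝ᵥ (simpLap n k S *ᵥ x) ≤ c₂ * (x ⬝ᵥ x))
    (hM0 : 0 ≤ M) (hM1 : c₁ ≤ M) (hM2 : c₁ + c₂ ≤ M) :
    topEigSum hA 2 ≤ M := by
  obtain ⟨s, hcard, hsum⟩ := topEigSum'_exists hA 2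
  rw [topEigSum_eq', hsum]
  have hev : ∀ i, hA.eigenvalues i ≤ c₁ := eigenvalue_le_of_quad hA h1
  obtain ⟨v, hv⟩ := h2
  rcases Nat.lt_or_ge s.card 1 with h0 | hge1
  · have : s = ∅ := Finset.card_eq_zero.1 (by omega)
    rw [this, Finset.sum_empty]
    exact hM0
  rcases Nat.lt_or_ge s.card 2 with h1' | hge2
  · have h1c : s.card = 1 := by omega
    obtain ⟨i, rfl⟩ := Finset.card_eq_one.1 h1c
    rw [Finset.sum_singleton]
    exact le_trans (hev i) hM1
  have hc2 : s.card = 2 := by omega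
  obtain ⟨i, j, hij, rfl⟩ := Finset.card_eq_two.1 hc2
  rw [Finset.sum_pair hij]
  rcases eigenvalue_pair_le hA v hv hij with h | h
  · linarith [hev j]
  · linarith [hev i]

lemma KE_offdiag_complete {n k : ℕ} (hk : 1 ≤ k) {W F G : Finset (Fin n)}
    (hW : W.card = k + 1) (hFW : F ⊆ W) (hGW : G ⊆ W) (hF : F.card = k) (hG : G.card = k)
    (hne : F ≠ G) :
    KE n k F G = -((∑ u ∈ W \ F, (-1:ℝ)^((W.filter (· < u)).card)) *
                  (∑ u ∈ W \ G, (-1:ℝ)^((W.filter (· < u)).card))) := by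
  have hWF : (W \ F).card = 1 := by rw [Finset.card_sdiff_of_subset hFW, hW, hF]; omega
  have hWG : (W \ G).card = 1 := by rw [Finset.card_sdiff_of_subset hGW, hW, hG]; omega
  obtain ⟨u, hu⟩ := Finset.card_eq_one.1 hWF
  obtain ⟨v, hv⟩ := Finset.card_eq_one.1 hWG
  have huW : u ∈ W := (Finset.mem_sdiff.1 (hu ▸ Finset.mem_singleton_self u)).1
  have huF : u ∉ F := (Finset.mem_sdiff.1 (hu ▸ Finset.mem_singleton_self u)).2
  have hvW : v ∈ W := (Finset.mem_sdiff.1 (hv ▸ Finset.mem_singleton_self v)).1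
  have hvG : v ∉ G := (Finset.mem_sdiff.1 (hv ▸ Finset.mem_singleton_self v)).2
  have huv : u ≠ v := by
    intro h
    apply hne
    rw [← Finset.sdiff_sdiff_eq_self hFW, ← Finset.sdiff_sdiff_eq_self hGW, hu, hv, h]
  have hvF : v ∈ F := by
    by_contra h
    have : v ∈ W \ F := Finset.mem_sdiff.2 ⟨hvW, h⟩
    rw [hu, Finset.mem_singleton] at this
    exact huv this.symm
  have huG : u ∈ G := by
    by_contra h
    have : u ∈ W \ G := Finset.mem_sdiff.2 ⟨huW, h⟩
    rw [hv, Finset.mem_singleton] at this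
    exact huv this
  -- intersection has card k-1
  have hcardsum := Finset.card_inter_add_card_union F G
  have hunion : (F ∪ G).card ≤ k + 1 := by
    rw [← hW]; exact Finset.card_le_card (Finset.union_subset hFW hGW)
  have hinterle : (F ∩ G).card ≤ k := by
    rw [← hF]; exact Finset.card_le_card Finset.inter_subset_left
  have hinterne : (F ∩ G).card ≠ k := by
    intro h
    have h1 : F ∩ G = F := Finset.eq_of_subset_of_card_le Finset.inter_subset_left
      (by omega)
    have h2 : F ⊆ G := by rw [← h1]; exact Finset.inter_subset_right
    exact hne (Finset.eq_of_subset_of_card_le h2 (by omega))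
  have hR₀c : (F ∩ G).card = k - 1 := by omega
  -- KE is the single product over F ∩ G
  have hKE : KE n k F G = bdryVal (F ∩ G) F * bdryVal (F ∩ G) G := by
    apply KE_single hR₀c
    intro R' hR'c h1 h2
    exact Finset.eq_of_subset_of_card_le (Finset.subset_inter h1 h2) (by omega)
  -- F \ (F ∩ G) = {v}, G \ (F ∩ G) = {u}
  have hFdiff : F \ (F ∩ G) = {v} := by
    rw [Finset.sdiff_inter_self_left]
    ext x
    simp only [Finset.mem_sdiff, Finset.mem_singleton]
    constructor
    · rintro ⟨hxF, hxG⟩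
      have : x ∈ W \ G := Finset.mem_sdiff.2 ⟨hFW hxF, hxG⟩
      rw [hv, Finset.mem_singleton] at this
      exact this
    · rintro rfl
      exact ⟨hvF, hvG⟩
  have hGdiff : G \ (F ∩ G) = {u} := by
    rw [Finset.inter_comm, Finset.sdiff_inter_self_left]
    ext x
    simp only [Finset.mem_sdiff, Finset.mem_singleton]
    constructor
    · rintro ⟨hxG, hxF⟩
      have : x ∈ W \ F := Finset.mem_sdiff.2 ⟨hGW hxG, hxF⟩
      rw [hu, Finset.mem_singleton] at this
      exact this
    · rintro rfl
      exact ⟨huG, huF⟩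
  have hbF : bdryVal (F ∩ G) F = (-1:ℝ)^((F.filter (· < v)).card) := by
    rw [bdryVal, if_pos Finset.inter_subset_left, hFdiff, Finset.sum_singleton]
  have hbG : bdryVal (F ∩ G) G = (-1:ℝ)^((G.filter (· < u)).card) := by
    rw [bdryVal, if_pos Finset.inter_subset_right, hGdiff, Finset.sum_singleton]
  -- F = W.erase u, G = W.erase v
  have hFe : F = W.erase u := by
    apply Finset.eq_of_subset_of_card_le (Finset.subset_erase.2 ⟨hFW, huF⟩)
    rw [Finset.card_erase_of_mem huW, hW, hF]
    omega
  have hGe : G = W.erase v := by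
    apply Finset.eq_of_subset_of_card_le (Finset.subset_erase.2 ⟨hGW, hvG⟩)
    rw [Finset.card_erase_of_mem hvW, hW, hG]
    omega
  have hfilF : F.filter (· < v) = (W.filter (· < v)).erase u := by
    rw [hFe, Finset.filter_erase]
  have hfilG : G.filter (· < u) = (W.filter (· < u)).erase v := by
    rw [hGe, Finset.filter_erase]
  rw [hKE, hbF, hbG, hu, hv, Finset.sum_singleton, Finset.sum_singleton, hfilF, hfilG]
  rcases lt_trichotomy u v with hlt | heq | hlt
  · have humem : u ∈ W.filter (· < v) := Finset.mem_filter.2 ⟨huW, hlt⟩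
    have hPc : ((W.filter (· < v)).erase u).card + 1 = (W.filter (· < v)).card :=
      Finset.card_erase_add_one humem
    have hvnot : v ∉ W.filter (· < u) := by
      intro h
      exact absurd ((Finset.mem_filter.1 h).2) (lt_asymm hlt)
    rw [Finset.erase_eq_of_notMem hvnot, ← hPc, pow_succ]
    ring
  · exact absurd heq huv
  · have hvmem : v ∈ W.filter (· < u) := Finset.mem_filter.2 ⟨hvW, hlt⟩
    have hQc : ((W.filter (· < u)).erase v).card + 1 = (W.filter (· < u)).card :=
      Finset.card_erase_add_one hvmem
    have hunot : u ∉ W.filter (· < v) := by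
      intro h
      exact absurd ((Finset.mem_filter.1 h).2) (lt_asymm hlt)
    rw [Finset.erase_eq_of_notMem hunot, ← hQc, pow_succ]
    ring

set_option maxHeartbeats 1000000 in
lemma case_a (n k : ℕ) (hk : 3 ≤ k) (W : Finset (Fin n)) (hW : W.card = k + 1) :
    topEigSum (simpLap_isHermitian n k (Finset.powersetCard k W)) 2 ≤
      ((k : ℝ) - 1) * (Finset.powersetCard k W).card := by
  have hk1 : 1 ≤ k := by omega
  set S : Finset (Finset (Fin n)) := Finset.powersetCard k W with hS
  set γ : Finset (Fin n) → ℝ :=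
    fun X => ∑ u ∈ W \ X, (-1:ℝ)^((W.filter (· < u)).card) with hγ
  have hmem : ∀ F ∈ S, F ⊆ W ∧ F.card = k := by
    intro F hF
    exact Finset.mem_powersetCard.1 hF
  have hγsq : ∀ F ∈ S, γ F * γ F = 1 := by
    intro F hF
    obtain ⟨hFW, hFc⟩ := hmem F hF
    have hWF : (W \ F).card = 1 := by rw [Finset.card_sdiff_of_subset hFW, hW, hFc]; omega
    obtain ⟨u, hu⟩ := Finset.card_eq_one.1 hWF
    rw [hγ]
    simp only
    rw [hu, Finset.sum_singleton, ← pow_add]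
    exact Even.neg_one_pow ⟨_, rfl⟩
  have hKEform : ∀ F ∈ S, ∀ G ∈ S,
      KE n k F G = (if F = G then ((k:ℝ)+1) else 0) - γ F * γ G := by
    intro F hF G hG
    obtain ⟨hFW, hFc⟩ := hmem F hF
    obtain ⟨hGW, hGc⟩ := hmem G hG
    by_cases h : F = G
    · subst h
      rw [if_pos rfl, KE_diag hk1 hFc, hγsq F hF]
      ring
    · rw [if_neg h, KE_offdiag_complete hk1 hW hFW hGW hFc hGc h]
      rw [hγ]
      ring
  have hScard : (S.card : ℝ) = (k:ℝ) + 1 := by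
    rw [hS, Finset.card_powersetCard, hW]
    have h1 : (k+1).choose k = k + 1 := by
      have h2 := Nat.choose_symm (by omega : 1 ≤ k + 1)
      simp only [Nat.add_sub_cancel] at h2
      rw [h2, Nat.choose_one_right]
    rw [h1]
    push_cast
    ring
  have hkR : (3:ℝ) ≤ (k:ℝ) := by exact_mod_cast hk
  have hq1 : ∀ x, x ⬝ᵥ (simpLap n k S *ᵥ x) ≤ ((k:ℝ) + 1) * (x ⬝ᵥ x) := by
    apply simpLap_quad_bound n k S (by positivity)
    intro Y
    have hstep : ∀ F ∈ S, ∑ G ∈ S, Y F * Y G * KE n k F G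
        = Y F * Y F * ((k:ℝ)+1) - ∑ G ∈ S, (γ F * Y F) * (γ G * Y G) := by
      intro F hF
      have h1 : ∀ G ∈ S, Y F * Y G * KE n k F G
          = (if F = G then Y F * Y G * ((k:ℝ)+1) else 0) - (γ F * Y F) * (γ G * Y G) := by
        intro G hG
        rw [hKEform F hF G hG]
        by_cases h : F = G
        · rw [if_pos h, if_pos h]; ring
        · rw [if_neg h, if_neg h]; ring
      rw [Finset.sum_congr rfl h1, Finset.sum_sub_distrib,
        Finset.sum_ite_eq S F (fun G => Y F * Y G * ((k:ℝ)+1)), if_pos hF]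
    rw [Finset.sum_congr rfl hstep, Finset.sum_sub_distrib]
    have h2 : ∑ F ∈ S, ∑ G ∈ S, (γ F * Y F) * (γ G * Y G)
        = (∑ F ∈ S, γ F * Y F) * (∑ F ∈ S, γ F * Y F) :=
      (Finset.sum_mul_sum S S _ _).symm
    rw [h2]
    have h3 : 0 ≤ (∑ F ∈ S, γ F * Y F) * (∑ F ∈ S, γ F * Y F) := mul_self_nonneg _
    have h4 : ∑ F ∈ S, Y F * Y F * ((k:ℝ)+1) = ((k:ℝ)+1) * ∑ F ∈ S, (Y F)^2 := by
      rw [Finset.mul_sum]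
      exact Finset.sum_congr rfl fun F _ => by ring
    rw [h4]
    linarith only [h3]
  rw [hScard]
  apply topEig2_le n k S (simpLap_isHermitian n k S) hq1
    ⟨0, fun x _ => hq1 x⟩
  · nlinarith only [hkR]
  · nlinarith only [hkR]
  · nlinarith only [hkR]

set_option maxHeartbeats 1000000 in
lemma case_b (n k : ℕ) (hk : 3 ≤ k) (R₁ R₂ : Finset (Fin n)) (a₁ b₁ a₂ b₂ : Fin n)
    (hR₁ : R₁.card = k - 1) (hR₂ : R₂.card = k - 1)
    (ha₁ : a₁ ∉ R₁) (hb₁ : b₁ ∉ R₁) (hab₁ : a₁ ≠ b₁)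
    (ha₂ : a₂ ∉ R₂) (hb₂ : b₂ ∉ R₂) (hab₂ : a₂ ≠ b₂)
    (hdisj : Disjoint (insert a₁ (insert b₁ R₁)) (insert a₂ (insert b₂ R₂))) :
    topEigSum (simpLap_isHermitian n k
        ({insert a₁ R₁, insert b₁ R₁, insert a₂ R₂, insert b₂ R₂} :
          Finset (Finset (Fin n)))) 2 ≤
      ((k : ℝ) - 1) *
        ({insert a₁ R₁, insert b₁ R₁, insert a₂ R₂, insert b₂ R₂} :
          Finset (Finset (Fin n))).card := by
  have hk1 : 1 ≤ k := by omega
  set A1 := insert a₁ R₁ with hA1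
  set B1 := insert b₁ R₁ with hB1
  set A2 := insert a₂ R₂ with hA2
  set B2 := insert b₂ R₂ with hB2
  set U1 := insert a₁ (insert b₁ R₁) with hU1
  set U2 := insert a₂ (insert b₂ R₂) with hU2
  set S : Finset (Finset (Fin n)) := {A1, B1, A2, B2} with hS
  have hc1 : A1.card = k := by rw [hA1, Finset.card_insert_of_notMem ha₁, hR₁]; omega
  have hc2 : B1.card = k := by rw [hB1, Finset.card_insert_of_notMem hb₁, hR₁]; omega
  have hc3 : A2.card = k := by rw [hA2, Finset.card_insert_of_notMem ha₂, hR₂]; omega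
  have hc4 : B2.card = k := by rw [hB2, Finset.card_insert_of_notMem hb₂, hR₂]; omega
  have hsubU1 : A1 ⊆ U1 := by
    intro x hx; rw [hA1, Finset.mem_insert] at hx; rw [hU1]
    simp only [Finset.mem_insert]; tauto
  have hsubU2 : B1 ⊆ U1 := by
    intro x hx; rw [hB1, Finset.mem_insert] at hx; rw [hU1]
    simp only [Finset.mem_insert]; tauto
  have hsubU3 : A2 ⊆ U2 := by
    intro x hx; rw [hA2, Finset.mem_insert] at hx; rw [hU2]
    simp only [Finset.mem_insert]; tauto
  have hsubU4 : B2 ⊆ U2 := by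
    intro x hx; rw [hB2, Finset.mem_insert] at hx; rw [hU2]
    simp only [Finset.mem_insert]; tauto
  have hcross : ∀ X Y : Finset (Fin n), X ⊆ U1 → Y ⊆ U2 →
      ∀ R' : Finset (Fin n), 0 < R'.card → R' ⊆ X → R' ⊆ Y → False := by
    intro X Y hXU hYU R' hpos h1 h2
    obtain ⟨x, hx⟩ := Finset.card_pos.1 hpos
    exact Finset.disjoint_left.1 hdisj (hXU (h1 hx)) (hYU (h2 hx))
  have huniq : ∀ (Rb : Finset (Fin n)), Rb.card = k - 1 → ∀ (u v : Fin n), u ≠ v →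
      u ∉ Rb → v ∉ Rb → ∀ R' : Finset (Fin n), R'.card = k - 1 →
      R' ⊆ insert u Rb → R' ⊆ insert v Rb → R' = Rb := by
    intro Rb hRb u v huv hu hv R' hR'c h1 h2
    by_cases hmem : u ∈ R'
    · rcases Finset.mem_insert.1 (h2 hmem) with h' | h'
      · exact absurd h' huv
      · exact absurd h' hu
    · have hsub : R' ⊆ Rb := (Finset.subset_insert_iff_of_notMem hmem).1 h1
      exact Finset.eq_of_subset_of_card_le hsub (by omega)
  -- distinctness
  have hmemA1 : a₁ ∈ A1 := by rw [hA1]; exact Finset.mem_insert_self a₁ R₁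
  have hmemA2 : a₂ ∈ A2 := by rw [hA2]; exact Finset.mem_insert_self a₂ R₂
  have hne12 : A1 ≠ B1 := by
    intro h
    have h2 : a₁ ∈ B1 := h ▸ hmemA1
    rw [hB1] at h2
    rcases Finset.mem_insert.1 h2 with h' | h'
    exacts [hab₁ h', ha₁ h']
  have hne34 : A2 ≠ B2 := by
    intro h
    have h2 : a₂ ∈ B2 := h ▸ hmemA2
    rw [hB2] at h2
    rcases Finset.mem_insert.1 h2 with h' | h'
    exacts [hab₂ h', ha₂ h']
  have hneCross : ∀ X Y : Finset (Fin n), X ⊆ U1 → Y ⊆ U2 → X.card = k → X ≠ Y := by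
    intro X Y hXU hYU hXc h
    exact hcross X Y hXU hYU X (by omega) (subset_refl X) (h ▸ subset_refl X)
  have hne13 : A1 ≠ A2 := hneCross A1 A2 hsubU1 hsubU3 hc1
  have hne14 : A1 ≠ B2 := hneCross A1 B2 hsubU1 hsubU4 hc1
  have hne23 : B1 ≠ A2 := hneCross B1 A2 hsubU2 hsubU3 hc2
  have hne24 : B1 ≠ B2 := hneCross B1 B2 hsubU2 hsubU4 hc2
  have hm1 : A1 ∉ ({B1, A2, B2} : Finset (Finset (Fin n))) := by
    simp only [Finset.mem_insert, Finset.mem_singleton]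
    push_neg
    exact ⟨hne12, hne13, hne14⟩
  have hm2 : B1 ∉ ({A2, B2} : Finset (Finset (Fin n))) := by
    simp only [Finset.mem_insert, Finset.mem_singleton]
    push_neg
    exact ⟨hne23, hne24⟩
  have hm3 : A2 ∉ ({B2} : Finset (Finset (Fin n))) := by
    simp only [Finset.mem_singleton]
    exact hne34
  have hexp : ∀ g : Finset (Fin n) → ℝ, ∑ X ∈ S, g X = g A1 + g B1 + g A2 + g B2 := by
    intro g
    rw [hS, Finset.sum_insert hm1, Finset.sum_insert hm2, Finset.sum_insert hm3,
      Finset.sum_singleton]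
    ring
  have hScard : (S.card : ℝ) = 4 := by
    rw [hS, Finset.card_insert_of_notMem hm1, Finset.card_insert_of_notMem hm2,
      Finset.card_insert_of_notMem hm3, Finset.card_singleton]
    norm_num
  -- epsilon values
  set ε1 : ℝ := bdryVal R₁ A1 with hε1
  set ε2 : ℝ := bdryVal R₁ B1 with hε2
  set ε3 : ℝ := bdryVal R₂ A2 with hε3
  set ε4 : ℝ := bdryVal R₂ B2 with hε4
  have he1 : ε1 * ε1 = 1 := bdryVal_mul_self hk1 hR₁ hc1 (Finset.subset_insert a₁ R₁)
  have he2 : ε2 * ε2 = 1 := bdryVal_mul_self hk1 hR₁ hc2 (Finset.subset_insert b₁ R₁)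
  have he3 : ε3 * ε3 = 1 := bdryVal_mul_self hk1 hR₂ hc3 (Finset.subset_insert a₂ R₂)
  have he4 : ε4 * ε4 = 1 := bdryVal_mul_self hk1 hR₂ hc4 (Finset.subset_insert b₂ R₂)
  set s1 : ℝ := ε1 * ε2 with hs1
  set s2 : ℝ := ε3 * ε4 with hs2
  have hs1sq : s1 * s1 = 1 := by
    rw [hs1]
    calc ε1 * ε2 * (ε1 * ε2) = (ε1 * ε1) * (ε2 * ε2) := by ring
    _ = 1 := by rw [he1, he2, mul_one]
  have hs2sq : s2 * s2 = 1 := by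
    rw [hs2]
    calc ε3 * ε4 * (ε3 * ε4) = (ε3 * ε3) * (ε4 * ε4) := by ring
    _ = 1 := by rw [he3, he4, mul_one]
  -- KE values
  have hKE11 : KE n k A1 A1 = k := KE_diag hk1 hc1
  have hKE22 : KE n k B1 B1 = k := KE_diag hk1 hc2
  have hKE33 : KE n k A2 A2 = k := KE_diag hk1 hc3
  have hKE44 : KE n k B2 B2 = k := KE_diag hk1 hc4
  have hKE12 : KE n k A1 B1 = s1 :=
    KE_single hR₁ (huniq R₁ hR₁ a₁ b₁ hab₁ ha₁ hb₁)
  have hKE21 : KE n k B1 A1 = s1 := by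
    rw [KE_single hR₁ (fun R' hc' h1 h2 => huniq R₁ hR₁ a₁ b₁ hab₁ ha₁ hb₁ R' hc' h2 h1),
      hs1, ← hε1, ← hε2]
    ring
  have hKE34 : KE n k A2 B2 = s2 :=
    KE_single hR₂ (huniq R₂ hR₂ a₂ b₂ hab₂ ha₂ hb₂)
  have hKE43 : KE n k B2 A2 = s2 := by
    rw [KE_single hR₂ (fun R' hc' h1 h2 => huniq R₂ hR₂ a₂ b₂ hab₂ ha₂ hb₂ R' hc' h2 h1),
      hs2, ← hε3, ← hε4]
    ring
  have hzero : ∀ X Y : Finset (Fin n), X ⊆ U1 → Y ⊆ U2 →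
      (KE n k X Y = 0 ∧ KE n k Y X = 0) := by
    intro X Y hXU hYU
    constructor
    · exact KE_zero (fun R' hc' h1 h2 => hcross X Y hXU hYU R' (by omega) h1 h2)
    · exact KE_zero (fun R' hc' h1 h2 => hcross X Y hXU hYU R' (by omega) h2 h1)
  have hkR : (3:ℝ) ≤ (k:ℝ) := by exact_mod_cast hk
  have hq1 : ∀ x, x ⬝ᵥ (simpLap n k S *ᵥ x) ≤ ((k:ℝ) + 1) * (x ⬝ᵥ x) := by
    apply simpLap_quad_bound n k S (by positivity)
    intro Y
    rw [hexp (fun X => ∑ G ∈ S, Y X * Y G * KE n k X G)]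
    rw [hexp (fun G => Y A1 * Y G * KE n k A1 G),
      hexp (fun G => Y B1 * Y G * KE n k B1 G),
      hexp (fun G => Y A2 * Y G * KE n k A2 G),
      hexp (fun G => Y B2 * Y G * KE n k B2 G),
      hexp (fun X => (Y X) ^ 2)]
    rw [hKE11, hKE22, hKE33, hKE44, hKE12, hKE21, hKE34, hKE43,
      (hzero A1 A2 hsubU1 hsubU3).1, (hzero A1 A2 hsubU1 hsubU3).2,
      (hzero A1 B2 hsubU1 hsubU4).1, (hzero A1 B2 hsubU1 hsubU4).2,
      (hzero B1 A2 hsubU2 hsubU3).1, (hzero B1 A2 hsubU2 hsubU3).2,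
      (hzero B1 B2 hsubU2 hsubU4).1, (hzero B1 B2 hsubU2 hsubU4).2]
    have c1 : 2 * (s1 * (Y A1 * Y B1)) ≤ Y A1 ^ 2 + Y B1 ^ 2 := by
      nlinarith only [sq_nonneg (Y A1 - s1 * Y B1), hs1sq, sq_nonneg (Y B1)]
    have c2 : 2 * (s2 * (Y A2 * Y B2)) ≤ Y A2 ^ 2 + Y B2 ^ 2 := by
      nlinarith only [sq_nonneg (Y A2 - s2 * Y B2), hs2sq, sq_nonneg (Y B2)]
    linarith only [c1, c2, sq_nonneg (Y A1), sq_nonneg (Y B1), sq_nonneg (Y A2),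
      sq_nonneg (Y B2)]
  rw [hScard]
  apply topEig2_le n k S (simpLap_isHermitian n k S) hq1
    ⟨0, fun x _ => hq1 x⟩
  · linarith only [hkR]
  · linarith only [hkR]
  · linarith only [hkR]

set_option maxHeartbeats 1000000 in
set_option maxRecDepth 40000 in
lemma case_c (n k : ℕ) (hk : 3 ≤ k) (R F : Finset (Fin n)) (a b c : Fin n)
    (hR : R.card = k - 1) (ha : a ∉ R) (hb : b ∉ R) (hc : c ∉ R)
    (hab : a ≠ b) (hac : a ≠ c) (hbc : b ≠ c) (hF : F.card = k)
    (hdisj : Disjoint (insert a (insert b (insert c R))) F) :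
    topEigSum (simpLap_isHermitian n k
        ({insert a R, insert b R, insert c R, F} : Finset (Finset (Fin n)))) 2 ≤
      ((k : ℝ) - 1) *
        ({insert a R, insert b R, insert c R, F} : Finset (Finset (Fin n))).card := by
  have hk1 : 1 ≤ k := by omega
  set A1 := insert a R with hA1
  set A2 := insert b R with hA2
  set A3 := insert c R with hA3
  set U := insert a (insert b (insert c R)) with hU
  set S : Finset (Finset (Fin n)) := {A1, A2, A3, F} with hS
  -- cards
  have hc1 : A1.card = k := by rw [hA1, Finset.card_insert_of_notMem ha, hR]; omega
  have hc2 : A2.card = k := by rw [hA2, Finset.card_insert_of_notMem hb, hR]; omega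
  have hc3 : A3.card = k := by rw [hA3, Finset.card_insert_of_notMem hc, hR]; omega
  -- subsets of U
  have hsubU1 : A1 ⊆ U := by
    intro x hx; rw [hA1, Finset.mem_insert] at hx; rw [hU]
    simp only [Finset.mem_insert]; tauto
  have hsubU2 : A2 ⊆ U := by
    intro x hx; rw [hA2, Finset.mem_insert] at hx; rw [hU]
    simp only [Finset.mem_insert]; tauto
  have hsubU3 : A3 ⊆ U := by
    intro x hx; rw [hA3, Finset.mem_insert] at hx; rw [hU]
    simp only [Finset.mem_insert]; tauto
  -- no (k-1)-subset lies in both an Ai and F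
  have hnoF : ∀ X : Finset (Fin n), X ⊆ U → ∀ R' : Finset (Fin n),
      R'.card = k - 1 → R' ⊆ X → R' ⊆ F → False := by
    intro X hXU R' hR'c h1 h2
    obtain ⟨x, hx⟩ := Finset.card_pos.1 (by omega : 0 < R'.card)
    exact Finset.disjoint_left.1 hdisj (hXU (h1 hx)) (h2 hx)
  -- uniqueness of common rows among the stars
  have huniq : ∀ (u v : Fin n), u ≠ v → u ∉ R → v ∉ R →
      ∀ R' : Finset (Fin n), R'.card = k - 1 →
      R' ⊆ insert u R → R' ⊆ insert v R → R' = R := by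
    intro u v huv hu hv R' hR'c h1 h2
    by_cases hmem : u ∈ R'
    · rcases Finset.mem_insert.1 (h2 hmem) with h' | h'
      · exact absurd h' huv
      · exact absurd h' hu
    · have hsub : R' ⊆ R := (Finset.subset_insert_iff_of_notMem hmem).1 h1
      exact Finset.eq_of_subset_of_card_le hsub (by omega)
  -- distinctness of facets
  have hmemA1 : a ∈ A1 := by rw [hA1]; exact Finset.mem_insert_self a R
  have hmemA2 : b ∈ A2 := by rw [hA2]; exact Finset.mem_insert_self b R
  have hne12 : A1 ≠ A2 := by
    intro h
    have h2 : a ∈ A2 := h ▸ hmemA1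
    rw [hA2] at h2
    rcases Finset.mem_insert.1 h2 with h' | h'
    exacts [hab h', ha h']
  have hne13 : A1 ≠ A3 := by
    intro h
    have h2 : a ∈ A3 := h ▸ hmemA1
    rw [hA3] at h2
    rcases Finset.mem_insert.1 h2 with h' | h'
    exacts [hac h', ha h']
  have hne23 : A2 ≠ A3 := by
    intro h
    have h2 : b ∈ A3 := h ▸ hmemA2
    rw [hA3] at h2
    rcases Finset.mem_insert.1 h2 with h' | h'
    exacts [hbc h', hb h']
  have hneF : ∀ X : Finset (Fin n), X ⊆ U → X.card = k → X ≠ F := by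
    intro X hXU hXc h
    obtain ⟨x, hx⟩ := Finset.card_pos.1 (by omega : 0 < X.card)
    exact Finset.disjoint_left.1 hdisj (hXU hx) (h ▸ hx)
  have hne1F : A1 ≠ F := hneF A1 hsubU1 hc1
  have hne2F : A2 ≠ F := hneF A2 hsubU2 hc2
  have hne3F : A3 ≠ F := hneF A3 hsubU3 hc3
  -- S expansion
  have hm1 : A1 ∉ ({A2, A3, F} : Finset (Finset (Fin n))) := by
    simp only [Finset.mem_insert, Finset.mem_singleton]
    push_neg
    exact ⟨hne12, hne13, hne1F⟩
  have hm2 : A2 ∉ ({A3, F} : Finset (Finset (Fin n))) := by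
    simp only [Finset.mem_insert, Finset.mem_singleton]
    push_neg
    exact ⟨hne23, hne2F⟩
  have hm3 : A3 ∉ ({F} : Finset (Finset (Fin n))) := by
    simp only [Finset.mem_singleton]
    exact hne3F
  have hexp : ∀ g : Finset (Fin n) → ℝ, ∑ X ∈ S, g X = g A1 + g A2 + g A3 + g F := by
    intro g
    rw [hS]
    rw [Finset.sum_insert hm1, Finset.sum_insert hm2, Finset.sum_insert hm3,
      Finset.sum_singleton]
    ring
  have hScard : (S.card : ℝ) = 4 := by
    rw [hS, Finset.card_insert_of_notMem hm1, Finset.card_insert_of_notMem hm2,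
      Finset.card_insert_of_notMem hm3, Finset.card_singleton]
    norm_num
  -- R not contained in F
  have hRF : ¬ R ⊆ F := fun h =>
    hnoF A1 hsubU1 R hR (Finset.subset_insert a R) h
  -- epsilon values
  set ε1 : ℝ := bdryVal R A1 with hε1
  set ε2 : ℝ := bdryVal R A2 with hε2
  set ε3 : ℝ := bdryVal R A3 with hε3
  have he1 : ε1 * ε1 = 1 := bdryVal_mul_self hk1 hR hc1 (Finset.subset_insert a R)
  have he2 : ε2 * ε2 = 1 := bdryVal_mul_self hk1 hR hc2 (Finset.subset_insert b R)
  have he3 : ε3 * ε3 = 1 := bdryVal_mul_self hk1 hR hc3 (Finset.subset_insert c R)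
  set s12 : ℝ := ε1 * ε2 with hs12
  set s13 : ℝ := ε1 * ε3 with hs13
  set s23 : ℝ := ε2 * ε3 with hs23
  have hs12sq : s12 * s12 = 1 := by
    rw [hs12]
    calc ε1 * ε2 * (ε1 * ε2) = (ε1 * ε1) * (ε2 * ε2) := by ring
    _ = 1 := by rw [he1, he2, mul_one]
  have hs13sq : s13 * s13 = 1 := by
    rw [hs13]
    calc ε1 * ε3 * (ε1 * ε3) = (ε1 * ε1) * (ε3 * ε3) := by ring
    _ = 1 := by rw [he1, he3, mul_one]
  have hs23sq : s23 * s23 = 1 := by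
    rw [hs23]
    calc ε2 * ε3 * (ε2 * ε3) = (ε2 * ε2) * (ε3 * ε3) := by ring
    _ = 1 := by rw [he2, he3, mul_one]
  -- first quadratic bound : all eigenvalues ≤ k + 2
  -- KE values
  have hKE11 : KE n k A1 A1 = k := KE_diag hk1 hc1
  have hKE22 : KE n k A2 A2 = k := KE_diag hk1 hc2
  have hKE33 : KE n k A3 A3 = k := KE_diag hk1 hc3
  have hKEFF : KE n k F F = k := KE_diag hk1 hF
  have hKE12 : KE n k A1 A2 = s12 := KE_single hR (huniq a b hab ha hb)
  have hKE21 : KE n k A2 A1 = s12 := by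
    rw [KE_single hR (fun R' hc' h1 h2 => huniq a b hab ha hb R' hc' h2 h1), hs12, ← hε1, ← hε2]
    ring
  have hKE13 : KE n k A1 A3 = s13 := KE_single hR (huniq a c hac ha hc)
  have hKE31 : KE n k A3 A1 = s13 := by
    rw [KE_single hR (fun R' hc' h1 h2 => huniq a c hac ha hc R' hc' h2 h1), hs13, ← hε1, ← hε3]
    ring
  have hKE23 : KE n k A2 A3 = s23 := KE_single hR (huniq b c hbc hb hc)
  have hKE32 : KE n k A3 A2 = s23 := by
    rw [KE_single hR (fun R' hc' h1 h2 => huniq b c hbc hb hc R' hc' h2 h1), hs23, ← hε2, ← hε3]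
    ring
  have hKE1F : KE n k A1 F = 0 :=
    KE_zero (fun R' hc' h1 h2 => hnoF A1 hsubU1 R' hc' h1 h2)
  have hKEF1 : KE n k F A1 = 0 :=
    KE_zero (fun R' hc' h1 h2 => hnoF A1 hsubU1 R' hc' h2 h1)
  have hKE2F : KE n k A2 F = 0 :=
    KE_zero (fun R' hc' h1 h2 => hnoF A2 hsubU2 R' hc' h1 h2)
  have hKEF2 : KE n k F A2 = 0 :=
    KE_zero (fun R' hc' h1 h2 => hnoF A2 hsubU2 R' hc' h2 h1)
  have hKE3F : KE n k A3 F = 0 :=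
    KE_zero (fun R' hc' h1 h2 => hnoF A3 hsubU3 R' hc' h1 h2)
  have hKEF3 : KE n k F A3 = 0 :=
    KE_zero (fun R' hc' h1 h2 => hnoF A3 hsubU3 R' hc' h2 h1)
  have hkR : (3:ℝ) ≤ (k:ℝ) := by exact_mod_cast hk
  have hq1 : ∀ x, x ⬝ᵥ (simpLap n k S *ᵥ x) ≤ ((k:ℝ) + 2) * (x ⬝ᵥ x) := by
    apply simpLap_quad_bound n k S (by positivity)
    intro Y
    rw [hexp (fun X => ∑ G ∈ S, Y X * Y G * KE n k X G)]
    rw [hexp (fun G => Y A1 * Y G * KE n k A1 G),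
      hexp (fun G => Y A2 * Y G * KE n k A2 G),
      hexp (fun G => Y A3 * Y G * KE n k A3 G),
      hexp (fun G => Y F * Y G * KE n k F G),
      hexp (fun X => (Y X) ^ 2)]
    rw [hKE11, hKE22, hKE33, hKEFF, hKE12, hKE21, hKE13, hKE31, hKE23, hKE32,
      hKE1F, hKEF1, hKE2F, hKEF2, hKE3F, hKEF3]
    have c12 : 2 * (s12 * (Y A1 * Y A2)) ≤ Y A1 ^ 2 + Y A2 ^ 2 := by
      nlinarith only [sq_nonneg (Y A1 - s12 * Y A2), hs12sq, sq_nonneg (Y A2)]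
    have c13 : 2 * (s13 * (Y A1 * Y A3)) ≤ Y A1 ^ 2 + Y A3 ^ 2 := by
      nlinarith only [sq_nonneg (Y A1 - s13 * Y A3), hs13sq, sq_nonneg (Y A3)]
    have c23 : 2 * (s23 * (Y A2 * Y A3)) ≤ Y A2 ^ 2 + Y A3 ^ 2 := by
      nlinarith only [sq_nonneg (Y A2 - s23 * Y A3), hs23sq, sq_nonneg (Y A3)]
    linarith only [c12, c13, c23, sq_nonneg (Y F), sq_nonneg (Y A1), sq_nonneg (Y A2),
      sq_nonneg (Y A3)]
  -- second (constrained) quadratic bound : ≤ k on the hyperplane x_R = 0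
  have hKE'11 : KE' n k R A1 A1 = (k:ℝ) - 1 :=
    KE'_diag_present hk1 hR hc1 (Finset.subset_insert a R)
  have hKE'22 : KE' n k R A2 A2 = (k:ℝ) - 1 :=
    KE'_diag_present hk1 hR hc2 (Finset.subset_insert b R)
  have hKE'33 : KE' n k R A3 A3 = (k:ℝ) - 1 :=
    KE'_diag_present hk1 hR hc3 (Finset.subset_insert c R)
  have hKE'FF : KE' n k R F F = (k:ℝ) := KE'_diag_absent hk1 hF hRF
  have hKE'12 : KE' n k R A1 A2 = 0 := KE'_offdiag_zero (huniq a b hab ha hb)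
  have hKE'21 : KE' n k R A2 A1 = 0 :=
    KE'_offdiag_zero (fun R' hc' h1 h2 => huniq a b hab ha hb R' hc' h2 h1)
  have hKE'13 : KE' n k R A1 A3 = 0 := KE'_offdiag_zero (huniq a c hac ha hc)
  have hKE'31 : KE' n k R A3 A1 = 0 :=
    KE'_offdiag_zero (fun R' hc' h1 h2 => huniq a c hac ha hc R' hc' h2 h1)
  have hKE'23 : KE' n k R A2 A3 = 0 := KE'_offdiag_zero (huniq b c hbc hb hc)
  have hKE'32 : KE' n k R A3 A2 = 0 :=
    KE'_offdiag_zero (fun R' hc' h1 h2 => huniq b c hbc hb hc R' hc' h2 h1)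
  have hKE'1F : KE' n k R A1 F = 0 :=
    KE'_offdiag_zero (fun R' hc' h1 h2 => (hnoF A1 hsubU1 R' hc' h1 h2).elim)
  have hKE'F1 : KE' n k R F A1 = 0 :=
    KE'_offdiag_zero (fun R' hc' h1 h2 => (hnoF A1 hsubU1 R' hc' h2 h1).elim)
  have hKE'2F : KE' n k R A2 F = 0 :=
    KE'_offdiag_zero (fun R' hc' h1 h2 => (hnoF A2 hsubU2 R' hc' h1 h2).elim)
  have hKE'F2 : KE' n k R F A2 = 0 :=
    KE'_offdiag_zero (fun R' hc' h1 h2 => (hnoF A2 hsubU2 R' hc' h2 h1).elim)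
  have hKE'3F : KE' n k R A3 F = 0 :=
    KE'_offdiag_zero (fun R' hc' h1 h2 => (hnoF A3 hsubU3 R' hc' h1 h2).elim)
  have hKE'F3 : KE' n k R F A3 = 0 :=
    KE'_offdiag_zero (fun R' hc' h1 h2 => (hnoF A3 hsubU3 R' hc' h2 h1).elim)
  have hq2 : ∀ x : {R' : Finset (Fin n) // R'.card = k - 1} → ℝ,
      x ⟨R, hR⟩ = 0 → x ⬝ᵥ (simpLap n k S *ᵥ x) ≤ (k:ℝ) * (x ⬝ᵥ x) := by
    intro x hx0
    apply simpLap_quad_bound' n k S R hR (by positivity) _ x hx0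
    intro Y
    rw [hexp (fun X => ∑ G ∈ S, Y X * Y G * KE' n k R X G)]
    rw [hexp (fun G => Y A1 * Y G * KE' n k R A1 G),
      hexp (fun G => Y A2 * Y G * KE' n k R A2 G),
      hexp (fun G => Y A3 * Y G * KE' n k R A3 G),
      hexp (fun G => Y F * Y G * KE' n k R F G),
      hexp (fun X => (Y X) ^ 2)]
    rw [hKE'11, hKE'22, hKE'33, hKE'FF, hKE'12, hKE'21, hKE'13, hKE'31, hKE'23, hKE'32,
      hKE'1F, hKE'F1, hKE'2F, hKE'F2, hKE'3F, hKE'F3]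
    linarith only [sq_nonneg (Y A1), sq_nonneg (Y A2), sq_nonneg (Y A3), sq_nonneg (Y F)]
  -- conclude
  rw [hScard]
  apply topEig2_le n k S (simpLap_isHermitian n k S) hq1
  · refine ⟨fun R' => if R' = (⟨R, hR⟩ : {R' : Finset (Fin n) // R'.card = k - 1})
      then 1 else 0, fun x hxv => ?_⟩
    apply hq2
    have : x ⬝ᵥ (fun R' => if R' = (⟨R, hR⟩ : {R' : Finset (Fin n) // R'.card = k - 1})
        then (1:ℝ) else 0) = x ⟨R, hR⟩ := by
      simp only [dotProduct, mul_ite, mul_one, mul_zero]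
      rw [Finset.sum_ite_eq' Finset.univ (⟨R, hR⟩ :
        {R' : Finset (Fin n) // R'.card = k - 1}) x]
      simp
    rw [this] at hxv
    exact hxv
  · linarith only [hkR]
  · linarith only [hkR]
  · linarith only [hkR]

/-- For `k ≥ 3`, each of the following `k`-families `H` satisfies
`λ₁(H) + λ₂(H) ≤ (k-1)·f_{k-1}(H)`:
(a) the complete `k`-family on a `(k+1)`-element vertex set;
(b) the disjoint union of two star `k`-families with two facets each (on disjoint
vertex sets);
(c) the disjoint union of a star `k`-family with three facets and a single facet
(on disjoint vertex sets). -/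
theorem forbidden_families (n k : ℕ) (hk : 3 ≤ k) :
    (∀ W : Finset (Fin n), W.card = k + 1 →
      topEigSum (simpLap_isHermitian n k (Finset.powersetCard k W)) 2 ≤
        ((k : ℝ) - 1) * (Finset.powersetCard k W).card) ∧
    (∀ (R₁ R₂ : Finset (Fin n)) (a₁ b₁ a₂ b₂ : Fin n),
      R₁.card = k - 1 → R₂.card = k - 1 →
      a₁ ∉ R₁ → b₁ ∉ R₁ → a₁ ≠ b₁ → a₂ ∉ R₂ → b₂ ∉ R₂ → a₂ ≠ b₂ →
      Disjoint (insert a₁ (insert b₁ R₁)) (insert a₂ (insert b₂ R₂)) →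
      topEigSum (simpLap_isHermitian n k
          ({insert a₁ R₁, insert b₁ R₁, insert a₂ R₂, insert b₂ R₂} :
            Finset (Finset (Fin n)))) 2 ≤
        ((k : ℝ) - 1) *
          ({insert a₁ R₁, insert b₁ R₁, insert a₂ R₂, insert b₂ R₂} :
            Finset (Finset (Fin n))).card) ∧
    (∀ (R F : Finset (Fin n)) (a b c : Fin n),
      R.card = k - 1 → a ∉ R → b ∉ R → c ∉ R → a ≠ b → a ≠ c → b ≠ c →
      F.card = k → Disjoint (insert a (insert b (insert c R))) F →
      topEigSum (simpLap_isHermitian n k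
          ({insert a R, insert b R, insert c R, F} : Finset (Finset (Fin n)))) 2 ≤
        ((k : ℝ) - 1) *
          ({insert a R, insert b R, insert c R, F} : Finset (Finset (Fin n))).card) := by
  refine ⟨?_, ?_, ?_⟩
  · intro W hW
    exact case_a n k hk W hW
  · intro R₁ R₂ a₁ b₁ a₂ b₂ h1 h2 h3 h4 h5 h6 h7 h8 h9
    exact case_b n k hk R₁ R₂ a₁ b₁ a₂ b₂ h1 h2 h3 h4 h5 h6 h7 h8 h9
  · intro R F a b c h1 h2 h3 h4 h5 h6 h7 h8 h9
    exact case_c n k hk R F a b c h1 h2 h3 h4 h5 h6 h7 h8 h9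
end

section
/- Let S be a k-family with k ≥ 3 whose matching number equals 2. Then λ₁(S) + λ₂(S) ≤ (k−1)·f_{k−1}(S) + k + 1; i.e., S satisfies the 2nd generalized Brouwer inequality. -/
/-- The matching number of a `k`-family: the maximum number of facets that
pairwise intersect in fewer than `k-1` elements (i.e. the maximum size of an
independent set in the ridge graph). -/
noncomputable def matchingNumber (n k : ℕ) (S : Finset (Finset (Fin n))) : ℕ :=
  (S.powerset.filter fun M =>
    ∀ F ∈ M, ∀ G ∈ M, F ≠ G → (F ∩ G).card < k - 1).sup Finset.card

section Aux
open Matrix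
variable {n k : ℕ} {S : Finset (Finset (Fin n))}


lemma abs_bdry_eq (hk : 1 ≤ k) (hcard : ∀ F ∈ S, F.card = k)
    (R : {R : Finset (Fin n) // R.card = k - 1}) (F : {F : Finset (Fin n) // F ∈ S}) :
    |bdry n k S R F| = if R.1 ⊆ F.1 then 1 else 0 := by
  by_cases h : R.1 ⊆ F.1
  · have hc : (F.1 \ R.1).card = 1 := by
      rw [Finset.card_sdiff_of_subset h, hcard F.1 F.2, R.2]; omega
    obtain ⟨x, hx⟩ := Finset.card_eq_one.mp hc
    simp only [bdry, if_pos h, hx, Finset.sum_singleton]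
    rw [abs_pow, abs_neg, abs_one, one_pow]
  · simp [bdry, if_neg h]

lemma diag_eq (hk : 1 ≤ k) (hcard : ∀ F ∈ S, F.card = k)
    (F : {F : Finset (Fin n) // F ∈ S}) :
    (((bdry n k S).conjTranspose * bdry n k S) F F : ℝ) = k := by
  classical
  have : ∀ R : {R : Finset (Fin n) // R.card = k - 1},
      bdry n k S R F * bdry n k S R F = if R.1 ⊆ F.1 then (1:ℝ) else 0 := by
    intro R
    have := abs_bdry_eq hk hcard R F
    by_cases h : R.1 ⊆ F.1
    · rw [if_pos h]; rw [if_pos h] at this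
      calc bdry n k S R F * bdry n k S R F = |bdry n k S R F| * |bdry n k S R F| :=
            (abs_mul_abs_self _).symm
        _ = 1 := by rw [this]; ring
    · rw [if_neg h] at this ⊢
      have h0 : bdry n k S R F = 0 := abs_eq_zero.mp this
      rw [h0]; ring
  rw [Matrix.mul_apply]
  simp only [Matrix.conjTranspose_apply, star_trivial]
  rw [Finset.sum_congr rfl (fun R _ => this R), Finset.sum_boole]
  have hcf : (Finset.univ.filter
      (fun R : {R : Finset (Fin n) // R.card = k - 1} => R.1 ⊆ F.1)).card
      = (F.1.powersetCard (k-1)).card := by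
    apply Finset.card_bij (fun R _ => R.1)
    · intro R hR
      rw [Finset.mem_powersetCard]
      exact ⟨(Finset.mem_filter.mp hR).2, R.2⟩
    · intro a _ b _ hab; exact Subtype.ext hab
    · intro T hT
      rw [Finset.mem_powersetCard] at hT
      exact ⟨⟨T, hT.2⟩, Finset.mem_filter.mpr ⟨Finset.mem_univ _, hT.1⟩, rfl⟩
  rw [hcf, Finset.card_powersetCard, hcard F.1 F.2]
  have : k.choose (k-1) = k := by
    rw [← Nat.choose_symm (Nat.sub_le k 1), Nat.sub_sub_self hk, Nat.choose_one_right]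
  rw [this]

lemma offdiag_le (hk : 1 ≤ k) (hcard : ∀ F ∈ S, F.card = k)
    (F G : {F : Finset (Fin n) // F ∈ S}) (hFG : F ≠ G) :
    |(((bdry n k S).conjTranspose * bdry n k S) F G : ℝ)| ≤ 1 := by
  classical
  rw [Matrix.mul_apply]
  simp only [Matrix.conjTranspose_apply, star_trivial]
  refine le_trans (Finset.abs_sum_le_sum_abs _ _) ?_
  have : ∀ R : {R : Finset (Fin n) // R.card = k - 1},
      |bdry n k S R F * bdry n k S R G|
        = if R.1 ⊆ F.1 ∧ R.1 ⊆ G.1 then (1:ℝ) else 0 := by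
    intro R
    rw [abs_mul, abs_bdry_eq hk hcard R F, abs_bdry_eq hk hcard R G]
    by_cases h1 : R.1 ⊆ F.1 <;> by_cases h2 : R.1 ⊆ G.1 <;>
      simp [h1, h2]
  rw [Finset.sum_congr rfl (fun R _ => this R), Finset.sum_boole]
  have hle : (Finset.univ.filter
      (fun R : {R : Finset (Fin n) // R.card = k - 1} =>
        R.1 ⊆ F.1 ∧ R.1 ⊆ G.1)).card ≤ 1 := by
    apply Finset.card_le_one.mpr
    intro a ha b hb
    rw [Finset.mem_filter] at ha hb
    have hIF : F.1 ∩ G.1 ⊆ F.1 := Finset.inter_subset_left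
    have hcI : (F.1 ∩ G.1).card ≤ k - 1 := by
      by_contra hcon
      push_neg at hcon
      have h1 : (F.1 ∩ G.1).card ≤ k := le_trans (Finset.card_le_card hIF)
        (le_of_eq (hcard F.1 F.2))
      have h2 : F.1 ∩ G.1 = F.1 := Finset.eq_of_subset_of_card_le hIF (by
        rw [hcard F.1 F.2]; omega)
      have h3 : F.1 ⊆ G.1 := by rw [← h2]; exact Finset.inter_subset_right
      have h4 : F.1 = G.1 := Finset.eq_of_subset_of_card_le h3 (by
        rw [hcard F.1 F.2, hcard G.1 G.2])
      exact hFG (Subtype.ext h4)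
    have key : ∀ c : {R : Finset (Fin n) // R.card = k - 1},
        c.1 ⊆ F.1 → c.1 ⊆ G.1 → c.1 = F.1 ∩ G.1 := by
      intro c hc1 hc2
      exact Finset.eq_of_subset_of_card_le (Finset.subset_inter hc1 hc2)
        (by rw [c.2]; exact hcI)
    apply Subtype.ext
    rw [key a ha.2.1 ha.2.2, key b hb.2.1 hb.2.2]
  calc ((Finset.univ.filter _).card : ℝ) ≤ (1:ℕ) := by exact_mod_cast hle
    _ = 1 := by norm_num

lemma eig_le (hk : 1 ≤ k) (hne : S.Nonempty) (hcard : ∀ F ∈ S, F.card = k)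
    (i : {R : Finset (Fin n) // R.card = k - 1}) :
    (simpLap_isHermitian n k S).eigenvalues i ≤ (k : ℝ) + S.card - 1 := by
  classical
  set hA := simpLap_isHermitian n k S
  set μ := hA.eigenvalues i with hμdef
  set v : {R : Finset (Fin n) // R.card = k - 1} → ℝ := ⇑(hA.eigenvectorBasis i) with hv
  have hv0 : v ≠ 0 := by
    have := hA.eigenvectorBasis.orthonormal.ne_zero i
    intro h
    apply this
    ext j
    exact congrFun h j
  have hveig : simpLap n k S *ᵥ v = μ • v := hA.mulVec_eigenvectorBasis i
  have hScard : 1 ≤ S.card := Finset.card_pos.mpr hne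
  set w : {F : Finset (Fin n) // F ∈ S} → ℝ := (bdry n k S).conjTranspose *ᵥ v with hw
  by_cases hw0 : w = 0
  · have : μ • v = 0 := by
      rw [← hveig]
      show (bdry n k S * (bdry n k S).conjTranspose) *ᵥ v = 0
      rw [← Matrix.mulVec_mulVec, ← hw, hw0, Matrix.mulVec_zero]
    rcases smul_eq_zero.mp this with h | h
    · rw [h]
      have : (1:ℝ) ≤ (k:ℝ) := by exact_mod_cast hk
      have : (1:ℝ) ≤ (S.card:ℝ) := by exact_mod_cast hScard
      linarith [show (1:ℝ) ≤ (k:ℝ) from by exact_mod_cast hk]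
    · exact absurd h hv0
  · set M := (bdry n k S).conjTranspose * bdry n k S with hM
    have hMw : M *ᵥ w = μ • w := by
      rw [hM, hw, Matrix.mulVec_mulVec, Matrix.mul_assoc, ← Matrix.mulVec_mulVec,
        ← simpLap, hveig, Matrix.mulVec_smul]
    have heig : Module.End.HasEigenvalue (Matrix.toLin' M) μ :=
      Module.End.hasEigenvalue_of_hasEigenvector
        ⟨Module.End.mem_eigenspace_iff.mpr (by rw [Matrix.toLin'_apply]; exact hMw), hw0⟩
    obtain ⟨F, hF⟩ := eigenvalue_mem_ball heig
    rw [Metric.mem_closedBall, Real.dist_eq] at hF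
    have hdiag : M F F = (k:ℝ) := diag_eq hk hcard F
    have hrow : ∑ G ∈ Finset.univ.erase F, ‖M F G‖ ≤ (S.card : ℝ) - 1 := by
      have h1 : ∑ G ∈ Finset.univ.erase F, ‖M F G‖ ≤
          ∑ _G ∈ Finset.univ.erase F, (1:ℝ) := by
        apply Finset.sum_le_sum
        intro G hG
        have : G ≠ F := (Finset.mem_erase.mp hG).1
        rw [Real.norm_eq_abs]; exact offdiag_le hk hcard F G (Ne.symm this)
      have h2 : ((Finset.univ.erase F).card : ℝ) = (S.card : ℝ) - 1 := by
        rw [Finset.card_erase_of_mem (Finset.mem_univ F), Finset.card_univ,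
          Fintype.card_coe, Nat.cast_sub hScard, Nat.cast_one]
      calc ∑ G ∈ Finset.univ.erase F, ‖M F G‖ ≤ ((Finset.univ.erase F).card : ℝ) := by
            simpa using h1
        _ = (S.card : ℝ) - 1 := h2
    have := abs_le.mp hF
    rw [hdiag] at this
    linarith [this.2, hrow]

end Aux

/-- A `k`-family (`k ≥ 3`) with matching number exactly `2` satisfies the second
generalized Brouwer inequality: `λ₁(S) + λ₂(S) ≤ (k-1)·f_{k-1}(S) + k + 1`. -/
theorem genBrouwer_two_of_matching_two (n k : ℕ) (hk : 3 ≤ k)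
    (S : Finset (Finset (Fin n))) (hne : S.Nonempty)
    (hcard : ∀ F ∈ S, F.card = k)
    (hmatch : matchingNumber n k S = 2) :
    topEigSum (simpLap_isHermitian n k S) 2 ≤
      ((k : ℝ) - 1) * S.card + (k : ℝ) + 1 := by
  classical
  have hk1 : 1 ≤ k := by omega
  have hScard : 1 ≤ S.card := Finset.card_pos.mpr hne
  set B : ℝ := (k : ℝ) + S.card - 1 with hBdef
  have hk3 : (3:ℝ) ≤ (k:ℝ) := by exact_mod_cast hk
  have hc1 : (1:ℝ) ≤ (S.card:ℝ) := by exact_mod_cast hScard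
  have hB0 : 0 ≤ B := by rw [hBdef]; linarith
  set l : List ℝ :=
    ((Finset.univ.val.map (simpLap_isHermitian n k S).eigenvalues).sort (· ≥ ·)) with hl
  have hmem : ∀ x ∈ l.take 2, x ≤ B := by
    intro x hx
    have hx1 : x ∈ l := List.mem_of_mem_take hx
    rw [hl, Multiset.mem_sort] at hx1
    obtain ⟨i, _, rfl⟩ := Multiset.mem_map.mp hx1
    exact eig_le hk1 hne hcard i
  have hsum : (l.take 2).sum ≤ (l.take 2).length • B :=
    List.sum_le_card_nsmul _ B hmem
  have hlen : (l.take 2).length ≤ 2 := by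
    rw [List.length_take]; exact min_le_left _ _
  have h2B : ((l.take 2).length : ℝ) * B ≤ 2 * B := by
    apply mul_le_mul_of_nonneg_right _ hB0
    exact_mod_cast hlen
  have htop : topEigSum (simpLap_isHermitian n k S) 2 ≤ 2 * B := by
    calc topEigSum (simpLap_isHermitian n k S) 2 = (l.take 2).sum := rfl
      _ ≤ (l.take 2).length • B := hsum
      _ = ((l.take 2).length : ℝ) * B := by rw [nsmul_eq_mul]
      _ ≤ 2 * B := h2B
  refine htop.trans ?_
  rw [hBdef]
  nlinarith [mul_nonneg (by linarith : (0:ℝ) ≤ (k:ℝ) - 3) (by linarith : (0:ℝ) ≤ (S.card:ℝ) - 1)]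
end

section
/- Let T be a simplicial tree (a k-family, k ≥ 2) with at least three facets that is not a star k-family (i.e., its facets do not all contain a common (k−1)-element set). Then there exists a facet F of T such that the set of facets of T other than F can be partitioned into two nonempty sets T₁ and T₂ with no facet of T₁ intersecting any facet of T₂ in exactly k−1 elements; in particular, the ridge graph of the k-family T ∖ {F} is disconnected. -/
/-- The ridge graph of a `k`-family: vertices are the facets, two facets being
adjacent exactly when their intersection has `k-1` elements. -/
def ridgeGraph (n k : ℕ) (S : Finset (Finset (Fin n))) :
    SimpleGraph {F : Finset (Fin n) // F ∈ S} where
  Adj F G := F ≠ G ∧ (F.1 ∩ G.1).card = k - 1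
  symm := ⟨fun F G h => ⟨h.1.symm, by rw [Finset.inter_comm]; exact h.2⟩⟩
  loopless := ⟨fun F h => h.1 rfl⟩

/-- A facet `F` of the family `T` is a leaf if either `F` is the only facet of `T`,
or there is a facet `G ≠ F` of `T` with
`F ∩ (⋃ of the facets of T other than F) ⊆ G`. -/
def IsLeaf (n : ℕ) (T : Finset (Finset (Fin n))) (F : Finset (Fin n)) : Prop :=
  T = {F} ∨ ∃ G ∈ T, G ≠ F ∧ F ∩ ((T.erase F).sup id) ⊆ G

/-- A `k`-family is a simplicial tree if it is ridge-connected and every nonempty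
subfamily of it has a leaf. -/
def IsSimplicialTree (n k : ℕ) (T : Finset (Finset (Fin n))) : Prop :=
  (ridgeGraph n k T).Connected ∧
    ∀ H ⊆ T, H.Nonempty → ∃ F ∈ H, IsLeaf n H F

open Finset

/-- Two distinct `k`-sets intersect in at most `k-1` elements. -/
lemma STaux.inter_card_le {n k : ℕ} {F G : Finset (Fin n)}
    (hF : F.card = k) (hG : G.card = k) (hne : F ≠ G) : (F ∩ G).card ≤ k - 1 := by
  have h1 : (F ∩ G).card ≤ k := hF ▸ card_le_card inter_subset_left
  have h2 : (F ∩ G).card ≠ k := by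
    intro h
    have : F ∩ G = F := Finset.eq_of_subset_of_card_le inter_subset_left (by omega)
    have hFG : F ⊆ G := by rw [← this]; exact inter_subset_right
    exact hne (Finset.eq_of_subset_of_card_le hFG (by omega))
  omega

/-- A nontrivial partition with no cross ridges gives a disconnected ridge graph. -/
lemma STaux.disconn (n k : ℕ) (S T₁ T₂ : Finset (Finset (Fin n)))
    (h1 : T₁.Nonempty) (h2 : T₂.Nonempty) (hd : Disjoint T₁ T₂)
    (hu : T₁ ∪ T₂ = S)
    (hcross : ∀ A ∈ T₁, ∀ B ∈ T₂, (A ∩ B).card ≠ k - 1) :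
    ¬ (ridgeGraph n k S).Connected := by
  intro hc
  obtain ⟨a, ha⟩ := h1
  obtain ⟨b, hb⟩ := h2
  have haS : a ∈ S := by rw [← hu]; exact mem_union_left _ ha
  have hbS : b ∈ S := by rw [← hu]; exact mem_union_right _ hb
  obtain ⟨w⟩ := hc.preconnected ⟨a, haS⟩ ⟨b, hbS⟩
  have key : ∀ (u v : {F // F ∈ S}) (_ : (ridgeGraph n k S).Walk u v),
      u.1 ∈ T₁ → v.1 ∈ T₁ := by
    intro u v w
    induction w with
    | nil => exact id
    | @cons u x v h p ih =>
      intro hu1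
      refine ih ?_
      have hxS : x.1 ∈ T₁ ∪ T₂ := by rw [hu]; exact x.2
      rcases Finset.mem_union.1 hxS with h1' | h2'
      · exact h1'
      · exact absurd h.2 (hcross _ hu1 _ h2')
  have hbT1 : b ∈ T₁ := key _ _ w ha
  exact (Finset.disjoint_left.mp hd hbT1) hb

/-- In a connected ridge graph with at least two facets, every facet has a neighbor. -/
lemma STaux.neighbor_exists {n k : ℕ} {T : Finset (Finset (Fin n))}
    (hconn : (ridgeGraph n k T).Connected) {F : Finset (Fin n)} (hF : F ∈ T)
    (h2 : 2 ≤ T.card) : ∃ H ∈ T, H ≠ F ∧ (F ∩ H).card = k - 1 := by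
  obtain ⟨H0, hH0, hne⟩ := Finset.exists_mem_ne (show 1 < T.card by omega) F
  have hadj : ∃ x : {X // X ∈ T}, (ridgeGraph n k T).Adj ⟨F, hF⟩ x := by
    have hne' : (⟨F, hF⟩ : {X // X ∈ T}) ≠ ⟨H0, hH0⟩ := by
      intro h; exact hne (congrArg Subtype.val h).symm
    obtain ⟨w⟩ := hconn.preconnected ⟨F, hF⟩ ⟨H0, hH0⟩
    generalize hu : (⟨F, hF⟩ : {X // X ∈ T}) = u at *
    generalize hv : (⟨H0, hH0⟩ : {X // X ∈ T}) = v at *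
    cases w with
    | nil => exact absurd rfl hne'
    | cons h p => exact ⟨_, h⟩
  obtain ⟨x, hx⟩ := hadj
  refine ⟨x.1, x.2, ?_, hx.2⟩
  intro h
  exact hx.1 (Subtype.ext h.symm)

/-- Rerouting walks around a removed leaf `F` whose joint is `G`. -/
lemma STaux.reroute {n k : ℕ} {T : Finset (Finset (Fin n))} {F G : Finset (Fin n)}
    (hcard : ∀ X ∈ T, X.card = k)
    (hRG : (F ∩ G).card = k - 1)
    (hneigh : ∀ H ∈ T, H ≠ F → (F ∩ H).card = k - 1 → F ∩ G ⊆ H)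
    {v : {X // X ∈ T}} (hv : v.1 ≠ F) :
    ∀ (L : ℕ) (u : {X // X ∈ T}) (w : (ridgeGraph n k T).Walk u v),
      w.length ≤ L → ∀ (hu : u.1 ≠ F),
      (ridgeGraph n k (T.erase F)).Reachable
        ⟨u.1, Finset.mem_erase.2 ⟨hu, u.2⟩⟩ ⟨v.1, Finset.mem_erase.2 ⟨hv, v.2⟩⟩ := by
  intro L
  induction L with
  | zero =>
    intro u w hw hu
    cases w with
    | nil => exact SimpleGraph.Reachable.refl _
    | cons h p => simp [SimpleGraph.Walk.length_cons] at hw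
  | succ L ihL =>
    intro u w hw hu
    cases w with
    | nil => exact SimpleGraph.Reachable.refl _
    | @cons _ x _ h p =>
      by_cases hx : x.1 = F
      · cases p with
        | nil => exact absurd hx hv
        | @cons _ y _ h2 q =>
          have hy : y.1 ≠ F := fun he => h2.1 (Subtype.ext (hx.trans he.symm))
          have hq : q.length ≤ L := by
            simp only [SimpleGraph.Walk.length_cons] at hw; omega
          have hrest := ihL y q hq hy
          have hFu : (F ∩ u.1).card = k - 1 := by
            rw [Finset.inter_comm]
            have := h.2; rwa [hx] at this
          have hFy : (F ∩ y.1).card = k - 1 := by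
            have := h2.2; rwa [hx] at this
          have hRu : F ∩ G ⊆ u.1 := hneigh u.1 u.2 hu hFu
          have hRy : F ∩ G ⊆ y.1 := hneigh y.1 y.2 hy hFy
          by_cases huy : u.1 = y.1
          · have heq : (⟨u.1, Finset.mem_erase.2 ⟨hu, u.2⟩⟩ : {X // X ∈ T.erase F})
                = ⟨y.1, Finset.mem_erase.2 ⟨hy, y.2⟩⟩ := Subtype.ext huy
            rw [heq]; exact hrest
          · refine SimpleGraph.Reachable.trans (SimpleGraph.Adj.reachable ?_) hrest
            refine ⟨fun he => huy (Subtype.mk_eq_mk.mp he), ?_⟩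
            refine le_antisymm (STaux.inter_card_le (hcard u.1 u.2) (hcard y.1 y.2) huy) ?_
            rw [← hRG]
            exact card_le_card (Finset.subset_inter hRu hRy)
      · have hp : p.length ≤ L := by
          simp only [SimpleGraph.Walk.length_cons] at hw; omega
        refine SimpleGraph.Reachable.trans (SimpleGraph.Adj.reachable ?_) (ihL x p hp hx)
        exact ⟨fun he => h.1 (Subtype.ext (Subtype.mk_eq_mk.mp he)), h.2⟩

/-- Removing a leaf preserves ridge-connectedness. -/
lemma STaux.erase_connected {n k : ℕ} {T : Finset (Finset (Fin n))} {F G : Finset (Fin n)}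
    (hcard : ∀ X ∈ T, X.card = k)
    (hRG : (F ∩ G).card = k - 1)
    (hneigh : ∀ H ∈ T, H ≠ F → (F ∩ H).card = k - 1 → F ∩ G ⊆ H)
    (hconn : (ridgeGraph n k T).Connected)
    (hne : (T.erase F).Nonempty) :
    (ridgeGraph n k (T.erase F)).Connected := by
  obtain ⟨w0, hw0⟩ := hne
  haveI : Nonempty {X // X ∈ T.erase F} := ⟨⟨w0, hw0⟩⟩
  refine ⟨fun u v => ?_⟩
  have huT : u.1 ∈ T := mem_of_mem_erase u.2
  have hvT : v.1 ∈ T := mem_of_mem_erase v.2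
  have huF : u.1 ≠ F := (mem_erase.1 u.2).1
  have hvF : v.1 ≠ F := (mem_erase.1 v.2).1
  obtain ⟨w⟩ := hconn.preconnected ⟨u.1, huT⟩ ⟨v.1, hvT⟩
  have := STaux.reroute hcard hRG hneigh (v := ⟨v.1, hvT⟩) hvF w.length ⟨u.1, huT⟩ w le_rfl huF
  exact this

/-- Main induction: a simplicial tree with at least three facets that is not a star
has a facet whose removal splits the rest into two parts with no cross ridges. -/
lemma STaux.key (n k : ℕ) (hk : 2 ≤ k) :
    ∀ (N : ℕ) (T : Finset (Finset (Fin n))), T.card ≤ N →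
    (∀ F ∈ T, F.card = k) → IsSimplicialTree n k T → 3 ≤ T.card →
    (¬ ∃ R : Finset (Fin n), R.card = k - 1 ∧ ∀ F ∈ T, R ⊆ F) →
    ∃ F ∈ T, ∃ T₁ T₂ : Finset (Finset (Fin n)),
      T₁.Nonempty ∧ T₂.Nonempty ∧ Disjoint T₁ T₂ ∧ T₁ ∪ T₂ = T.erase F ∧
      (∀ A ∈ T₁, ∀ B ∈ T₂, (A ∩ B).card ≠ k - 1) := by
  intro N
  induction N with
  | zero => intro T h0 _ _ h3 _; omega
  | succ N ih =>
    intro T hle hcard htree h3 hnotstar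
    obtain ⟨hconn, hsub⟩ := htree
    have hTne : T.Nonempty := card_pos.mp (by omega)
    obtain ⟨F, hFT, hleaf⟩ := hsub T Finset.Subset.rfl hTne
    rcases hleaf with hT1 | ⟨G, hGT, hGF, hjoint⟩
    · rw [hT1] at h3; simp at h3
    -- R = F ∩ G
    have hsubR : ∀ H ∈ T, H ≠ F → F ∩ H ⊆ F ∩ G := by
      intro H hH hne a ha
      rw [mem_inter] at ha
      refine mem_inter.2 ⟨ha.1, hjoint (mem_inter.2 ⟨ha.1, ?_⟩)⟩
      exact Finset.le_sup (f := id) (Finset.mem_erase.2 ⟨hne, hH⟩) ha.2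
    have hRle : (F ∩ G).card ≤ k - 1 :=
      STaux.inter_card_le (hcard F hFT) (hcard G hGT) (fun h => hGF h.symm)
    obtain ⟨H0, hH0T, hH0F, hH0card⟩ := STaux.neighbor_exists hconn hFT (by omega)
    have hRcard : (F ∩ G).card = k - 1 := by
      have h1 : k - 1 ≤ (F ∩ G).card := by
        rw [← hH0card]; exact card_le_card (hsubR H0 hH0T hH0F)
      omega
    have hneigh : ∀ H ∈ T, H ≠ F → (F ∩ H).card = k - 1 → F ∩ G ⊆ H := by
      intro H hH hne hc
      have h1 : F ∩ H = F ∩ G :=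
        Finset.eq_of_subset_of_card_le (hsubR H hH hne) (by omega)
      rw [← h1]; exact inter_subset_right
    have hcardE : (T.erase F).card = T.card - 1 := card_erase_of_mem hFT
    by_cases hstar : ∃ R'' : Finset (Fin n), R''.card = k - 1 ∧ ∀ H ∈ T.erase F, R'' ⊆ H
    · -- Case A: the rest is a star; the joint G is the cut facet.
      obtain ⟨R'', hR''card, hR''sub⟩ := hstar
      have hR''F : ¬ R'' ⊆ F := by
        intro hsub'
        refine hnotstar ⟨R'', hR''card, fun X hX => ?_⟩
        by_cases hXF : X = F
        · rw [hXF]; exact hsub'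
        · exact hR''sub X (mem_erase.2 ⟨hXF, hX⟩)
      have hcup : k ≤ ((F ∩ G) ∪ R'').card := by
        have h2 : ¬ R'' ⊆ F ∩ G := fun hh => hR''F (hh.trans inter_subset_left)
        have h3' : F ∩ G ⊂ (F ∩ G) ∪ R'' := by
          refine Finset.ssubset_iff_of_subset subset_union_left |>.2 ?_
          obtain ⟨a, ha, ha2⟩ := Finset.not_subset.1 h2
          exact ⟨a, mem_union_right _ ha, ha2⟩
        have := Finset.card_lt_card h3'
        omega
      have huniq : ∀ H ∈ T, H ≠ F → (F ∩ H).card = k - 1 → H = G := by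
        intro H hH hne hc
        have hRH := hneigh H hH hne hc
        have h1 : (F ∩ G) ∪ R'' ⊆ H :=
          union_subset hRH (hR''sub H (mem_erase.2 ⟨hne, hH⟩))
        have hHeq : H = (F ∩ G) ∪ R'' :=
          (Finset.eq_of_subset_of_card_le h1 (by rw [hcard H hH]; exact hcup)).symm
        have h1G : (F ∩ G) ∪ R'' ⊆ G :=
          union_subset inter_subset_right (hR''sub G (mem_erase.2 ⟨hGF, hGT⟩))
        have hGeq : G = (F ∩ G) ∪ R'' :=
          (Finset.eq_of_subset_of_card_le h1G (by rw [hcard G hGT]; exact hcup)).symm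
        rw [hHeq, ← hGeq]
      refine ⟨G, hGT, {F}, (T.erase F).erase G, ⟨F, mem_singleton_self F⟩, ?_, ?_, ?_, ?_⟩
      · rw [← card_pos, card_erase_of_mem (mem_erase.2 ⟨hGF, hGT⟩), hcardE]
        omega
      · simp [Finset.disjoint_singleton_left, Finset.mem_erase]
      · rw [Finset.erase_right_comm, ← Finset.insert_eq]
        exact Finset.insert_erase (mem_erase.2 ⟨fun h => hGF h.symm, hFT⟩)
      · intro A hA B hB
        rw [mem_singleton] at hA; subst hA
        intro hcc
        have hB1 := mem_erase.1 hB
        have hB2 := mem_erase.1 hB1.2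
        exact hB1.1 (huniq B hB2.2 hB2.1 hcc)
    · -- Case B: the rest is not a star; use the induction hypothesis.
      have hconn' : (ridgeGraph n k (T.erase F)).Connected :=
        STaux.erase_connected hcard hRcard hneigh hconn (card_pos.mp (by omega))
      have h3' : 3 ≤ (T.erase F).card := by
        by_contra hlt
        have h2' : (T.erase F).card = 2 := by omega
        obtain ⟨A, B, hABne, hTe⟩ := Finset.card_eq_two.1 h2'
        have hAe : A ∈ T.erase F := by rw [hTe]; simp
        have hBe : B ∈ T.erase F := by rw [hTe]; simp
        have hAT : A ∈ T := mem_of_mem_erase hAe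
        have hBT : B ∈ T := mem_of_mem_erase hBe
        have hAF : A ≠ F := (mem_erase.1 hAe).1
        have hBF : B ≠ F := (mem_erase.1 hBe).1
        have hmem3 : ∀ H ∈ T, H = F ∨ H = A ∨ H = B := by
          intro H hH
          by_cases hHF : H = F
          · exact Or.inl hHF
          · have : H ∈ T.erase F := mem_erase.2 ⟨hHF, hH⟩
            rw [hTe] at this
            rcases mem_insert.1 this with h | h
            · exact Or.inr (Or.inl h)
            · exact Or.inr (Or.inr (mem_singleton.1 h))
        have getd : ∀ X ∈ T, X ≠ F → X ≠ A → (X ∩ A).card = k - 1 ∨ F ∩ G ⊆ X → True := fun _ _ _ _ _ => trivial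
        -- for A: A has a neighbor, which is F or B
        have dA : (A ∩ B).card = k - 1 ∨ F ∩ G ⊆ A := by
          obtain ⟨H, hHT, hHA, hcAH⟩ := STaux.neighbor_exists hconn hAT (by omega)
          rcases hmem3 H hHT with rfl | rfl | rfl
          · exact Or.inr (hneigh A hAT hAF (by rwa [Finset.inter_comm] at hcAH))
          · exact absurd rfl hHA
          · exact Or.inl hcAH
        have dB : (B ∩ A).card = k - 1 ∨ F ∩ G ⊆ B := by
          obtain ⟨H, hHT, hHB, hcBH⟩ := STaux.neighbor_exists hconn hBT (by omega)
          rcases hmem3 H hHT with rfl | rfl | rfl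
          · exact Or.inr (hneigh B hBT hBF (by rwa [Finset.inter_comm] at hcBH))
          · exact Or.inl hcBH
          · exact absurd rfl hHB
        have hABcard : (A ∩ B).card = k - 1 := by
          rcases dA with h | hA'
          · exact h
          rcases dB with h | hB'
          · rwa [Finset.inter_comm] at h
          refine le_antisymm (STaux.inter_card_le (hcard A hAT) (hcard B hBT) hABne) ?_
          rw [← hRcard]
          exact card_le_card (Finset.subset_inter hA' hB')
        refine hstar ⟨A ∩ B, hABcard, ?_⟩
        intro H hH
        rw [hTe] at hH
        rcases mem_insert.1 hH with rfl | h
        · exact inter_subset_left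
        · rw [mem_singleton.1 h]; exact inter_subset_right
      obtain ⟨F', hF'T', T₁, T₂, hT₁ne, hT₂ne, hdisj, hunion, hcross⟩ :=
        ih (T.erase F) (by omega)
          (fun X hX => hcard X (mem_of_mem_erase hX))
          ⟨hconn', fun H hH hne => hsub H (hH.trans (erase_subset F T)) hne⟩
          h3' hstar
      have hF'T : F' ∈ T := mem_of_mem_erase hF'T'
      have hF'F : F' ≠ F := (mem_erase.1 hF'T').1
      have hFnotin : F ∉ T₁ ∪ T₂ := by
        rw [hunion]
        intro hmem
        exact (mem_erase.1 (mem_of_mem_erase hmem)).1 rfl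
      have hunion' : insert F (T₁ ∪ T₂) = T.erase F' := by
        rw [hunion, Finset.erase_right_comm]
        exact Finset.insert_erase (mem_erase.2 ⟨hF'F.symm, hFT⟩)
      -- membership facts for elements of T₁, T₂
      have hmemT : ∀ X, X ∈ T₁ ∪ T₂ → X ∈ T ∧ X ≠ F := by
        intro X hX
        rw [hunion] at hX
        have := mem_of_mem_erase hX
        exact ⟨mem_of_mem_erase this, (mem_erase.1 this).1⟩
      by_cases hc2 : ∃ B ∈ T₂, (F ∩ B).card = k - 1
      · obtain ⟨B₀, hB₀, hB₀c⟩ := hc2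
        refine ⟨F', hF'T, T₁, insert F T₂, hT₁ne, insert_nonempty _ _, ?_, ?_, ?_⟩
        · rw [Finset.disjoint_insert_right]
          exact ⟨fun h => hFnotin (mem_union_left _ h), hdisj⟩
        · rw [Finset.union_insert, hunion']
        · intro A hA B hB
          rcases mem_insert.1 hB with hBF | hB2
          · intro hAF
            rw [hBF] at hAF
            obtain ⟨hAT, hAFne⟩ := hmemT A (mem_union_left _ hA)
            obtain ⟨hB₀T, hB₀F⟩ := hmemT B₀ (mem_union_right _ hB₀)
            have hRA : F ∩ G ⊆ A :=
              hneigh A hAT hAFne (by rwa [Finset.inter_comm] at hAF)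
            have hRB₀ : F ∩ G ⊆ B₀ := hneigh B₀ hB₀T hB₀F hB₀c
            have hABne : A ≠ B₀ := by
              intro h
              exact (Finset.disjoint_left.mp hdisj hA) (h ▸ hB₀)
            refine hcross A hA B₀ hB₀ ?_
            refine le_antisymm (STaux.inter_card_le (hcard A hAT) (hcard B₀ hB₀T) hABne) ?_
            rw [← hRcard]
            exact card_le_card (Finset.subset_inter hRA hRB₀)
          · exact hcross A hA B hB2
      · push_neg at hc2
        refine ⟨F', hF'T, insert F T₁, T₂, insert_nonempty _ _, hT₂ne, ?_, ?_, ?_⟩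
        · rw [Finset.disjoint_insert_left]
          exact ⟨fun h => hFnotin (mem_union_right _ h), hdisj⟩
        · rw [Finset.insert_union, hunion']
        · intro A hA B hB
          rcases mem_insert.1 hA with hAF | hA1
          · intro hAB
            rw [hAF] at hAB
            exact hc2 B hB hAB
          · exact hcross A hA1 B hB

/-- A simplicial tree with at least three facets that is not a star `k`-family has a
facet whose removal disconnects it: the remaining facets can be partitioned into two
nonempty sets, no facet of one intersecting a facet of the other in exactly `k-1`
elements; in particular the ridge graph of the remaining family is disconnected. -/
theorem simplicial_tree_decomposition (n k : ℕ) (hk : 2 ≤ k)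
    (T : Finset (Finset (Fin n))) (hne : T.Nonempty)
    (hcard : ∀ F ∈ T, F.card = k)
    (htree : IsSimplicialTree n k T) (h3 : 3 ≤ T.card)
    (hnotstar : ¬ ∃ R : Finset (Fin n), R.card = k - 1 ∧ ∀ F ∈ T, R ⊆ F) :
    ∃ F ∈ T, ∃ T₁ T₂ : Finset (Finset (Fin n)),
      T₁.Nonempty ∧ T₂.Nonempty ∧ Disjoint T₁ T₂ ∧ T₁ ∪ T₂ = T.erase F ∧
      (∀ A ∈ T₁, ∀ B ∈ T₂, (A ∩ B).card ≠ k - 1) ∧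
      ¬ (ridgeGraph n k (T.erase F)).Connected := by
  obtain ⟨F, hF, T₁, T₂, h1, h2, h3', h4, h5⟩ :=
    STaux.key n k hk T.card T le_rfl hcard htree h3 hnotstar
  exact ⟨F, hF, T₁, T₂, h1, h2, h3', h4, h5,
    STaux.disconn n k _ T₁ T₂ h1 h2 h3' h4 h5⟩
end

section
/- Let S be a k-family (k ≥ 2) on a finite vertex set whose ridge graph is complete, i.e., every two distinct facets of S intersect in exactly k−1 elements. Then there exists a linear order on the vertex set of S with respect to which S is shifted: for every facet F, every v ∈ F, and every vertex w < v with w ∉ F, the set (F∖{v}) ∪ {w} is also a facet of S. -/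
open Finset

/-- Build a linear order from a "tier" function: smaller tiers come first. -/
lemma exists_mono_order (n : ℕ) (t : Fin n → ℕ) :
    ∃ r : LinearOrder (Fin n), ∀ w v : Fin n, r.lt w v → t w ≤ t v := by
  classical
  let f : Fin n → ℕ := fun x => t x * n + x.val
  have hmul : ∀ x y : Fin n, t x < t y → f x < f y := by
    intro x y h
    have h1 : (t x + 1) * n ≤ t y * n := Nat.mul_le_mul_right n h
    have h2 : x.val < n := x.isLt
    calc f x = t x * n + x.val := rfl
      _ < t x * n + n := by omega
      _ = (t x + 1) * n := by ring
      _ ≤ t y * n := h1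
      _ ≤ t y * n + y.val := Nat.le_add_right _ _
  have key : ∀ x y : Fin n, f x < f y → t x ≤ t y := by
    intro x y h
    by_contra hc
    push_neg at hc
    exact absurd h (not_lt_of_gt (hmul y x hc))
  have hinj : Function.Injective f := by
    intro x y hxy
    have ht : t x = t y := by
      rcases lt_trichotomy (t x) (t y) with h | h | h
      · exact absurd hxy (ne_of_lt (hmul x y h))
      · exact h
      · exact absurd hxy.symm (ne_of_lt (hmul y x h))
    have : t x * n + x.val = t y * n + y.val := hxy
    rw [ht] at this
    have : x.val = y.val := by omega
    exact Fin.val_injective this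
  refine ⟨LinearOrder.lift' f hinj, ?_⟩
  intro w v h
  exact key w v h

lemma classify (n k : ℕ) (hk : 2 ≤ k) (S : Finset (Finset (Fin n)))
    (F₀ : Finset (Fin n)) (hF₀ : F₀ ∈ S)
    (hcard : ∀ F ∈ S, F.card = k)
    (hridge : ∀ F ∈ S, ∀ G ∈ S, F ≠ G → (F ∩ G).card = k - 1) :
    (∃ A : Finset (Fin n), ∀ F ∈ S, A ⊆ F ∧ F.card = A.card + 1) ∨
    (∃ B : Finset (Fin n), ∀ F ∈ S, F ⊆ B ∧ B.card = F.card + 1) := by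
  classical
  by_cases hsing : ∀ G ∈ S, G = F₀
  · left
    obtain ⟨A, hAsub, hAcard⟩ := Finset.exists_subset_card_eq (s := F₀) (n := k - 1)
      (by rw [hcard F₀ hF₀]; omega)
    refine ⟨A, fun F hF => ?_⟩
    rw [hsing F hF]
    exact ⟨hAsub, by rw [hcard F₀ hF₀, hAcard]; omega⟩
  · push_neg at hsing
    obtain ⟨G, hG, hGne⟩ := hsing
    set A := F₀ ∩ G with hA
    have hAcard : A.card = k - 1 := hridge F₀ hF₀ G hG (fun h => hGne h.symm)
    by_cases hstar : ∀ H ∈ S, A ⊆ H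
    · left
      exact ⟨A, fun F hF => ⟨hstar F hF, by rw [hcard F hF, hAcard]; omega⟩⟩
    · right
      push_neg at hstar
      obtain ⟨H₀, hH₀, hH₀A⟩ := hstar
      have hBcard : (F₀ ∪ G).card = k + 1 := by
        have h := Finset.card_union_add_card_inter F₀ G
        rw [hcard F₀ hF₀, hcard G hG, ← hA, hAcard] at h
        omega
      -- any facet not containing A is inside F₀ ∪ G
      have sub : ∀ H ∈ S, ¬ A ⊆ H → H ⊆ F₀ ∪ G := by
        intro H hH hAH
        have hHF : H ≠ F₀ := by rintro rfl; exact hAH Finset.inter_subset_left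
        have hHG : H ≠ G := by rintro rfl; exact hAH Finset.inter_subset_right
        have h1 : (H ∩ F₀).card = k - 1 := hridge H hH F₀ hF₀ hHF
        have h2 : (H ∩ G).card = k - 1 := hridge H hH G hG hHG
        have hA' : (H ∩ A).card < k - 1 := by
          rw [← hAcard]
          exact Finset.card_lt_card (Finset.ssubset_iff_subset_ne.mpr
            ⟨Finset.inter_subset_right, fun h => hAH (h ▸ Finset.inter_subset_left)⟩)
        have hdistrib : H ∩ (F₀ ∪ G) = (H ∩ F₀) ∪ (H ∩ G) :=
          Finset.inter_union_distrib_left H F₀ G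
        have hinter : (H ∩ F₀) ∩ (H ∩ G) = H ∩ A := by
          rw [hA]; ext x; simp only [Finset.mem_inter]; tauto
        have hcu := Finset.card_union_add_card_inter (H ∩ F₀) (H ∩ G)
        rw [h1, h2, hinter] at hcu
        have hle : H.card ≤ (H ∩ (F₀ ∪ G)).card := by
          rw [hdistrib, hcard H hH]; omega
        have := Finset.eq_of_subset_of_card_le Finset.inter_subset_left hle
        exact Finset.inter_eq_left.mp this
      refine ⟨F₀ ∪ G, fun F hF => ?_⟩
      refine ⟨?_, by rw [hBcard, hcard F hF]⟩
      by_cases hAF : A ⊆ F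
      · by_contra hFB
        obtain ⟨c, hcF, hcB⟩ := Finset.not_subset.mp hFB
        have hH0B : H₀ ⊆ F₀ ∪ G := sub H₀ hH₀ hH₀A
        have hFH : F ≠ H₀ := fun h => hH₀A (h ▸ hAF)
        have hFHcard : (F ∩ H₀).card = k - 1 := hridge F hF H₀ hH₀ hFH
        have hcA : c ∉ A := fun h => hcB (Finset.mem_union_left _ (Finset.inter_subset_left h))
        -- F \ A = {c}
        have hFA : (F \ A).card = 1 := by
          rw [Finset.card_sdiff_of_subset hAF, hcard F hF, hAcard]; omega
        have hc' : c ∈ F \ A := Finset.mem_sdiff.mpr ⟨hcF, hcA⟩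
        have hFAc : F \ A = {c} :=
          Finset.eq_singleton_iff_unique_mem.mpr ⟨hc', fun x hx => by
            obtain ⟨a, ha⟩ := Finset.card_eq_one.mp hFA
            rw [ha] at hx hc'
            rw [Finset.mem_singleton.mp hx, Finset.mem_singleton.mp hc']⟩
        have hFsub : F ⊆ insert c A := by
          intro x hx
          by_cases hxA : x ∈ A
          · exact Finset.mem_insert_of_mem hxA
          · have : x ∈ F \ A := Finset.mem_sdiff.mpr ⟨hx, hxA⟩
            rw [hFAc, Finset.mem_singleton] at this
            exact this ▸ Finset.mem_insert_self _ _
        have hcH : c ∉ H₀ := fun h => hcB (hH0B h)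
        have hsubA : F ∩ H₀ ⊆ A ∩ H₀ := by
          intro x hx
          obtain ⟨hx1, hx2⟩ := Finset.mem_inter.mp hx
          have := hFsub hx1
          rcases Finset.mem_insert.mp this with rfl | hxA
          · exact absurd hx2 hcH
          · exact Finset.mem_inter.mpr ⟨hxA, hx2⟩
        have hAH' : (A ∩ H₀).card < k - 1 := by
          rw [← hAcard]
          exact Finset.card_lt_card (Finset.ssubset_iff_subset_ne.mpr
            ⟨Finset.inter_subset_left, fun h => hH₀A (h ▸ Finset.inter_subset_right)⟩)
        have := Finset.card_le_card hsubA
        omega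
      · exact sub F hF hAF

/-- If every two distinct facets of a `k`-family `S` intersect in exactly `k-1`
elements (i.e. the ridge graph of `S` is complete), then there is a linear order on
the vertex set with respect to which `S` is shifted: for every facet `F`, every
`v ∈ F` and every vertex `w < v` with `w ∉ F`, the set `(F \ {v}) ∪ {w}` is also a
facet of `S`. -/
theorem shifted_of_complete_ridge (n k : ℕ) (hk : 2 ≤ k)
    (S : Finset (Finset (Fin n))) (hne : S.Nonempty)
    (hcard : ∀ F ∈ S, F.card = k)
    (hridge : ∀ F ∈ S, ∀ G ∈ S, F ≠ G → (F ∩ G).card = k - 1) :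
    ∃ r : LinearOrder (Fin n), ∀ F ∈ S, ∀ v ∈ F, ∀ w : Fin n,
      r.lt w v → w ∉ F → insert w (F.erase v) ∈ S := by
  classical
  obtain ⟨F₀, hF₀⟩ := hne
  rcases classify n k hk S F₀ hF₀ hcard hridge with ⟨A, hA⟩ | ⟨B, hB⟩
  · -- star case
    set U := S.sup id with hU
    obtain ⟨r, hr⟩ := exists_mono_order n
      (fun x => if x ∈ A then 0 else if x ∈ U then 1 else 2)
    refine ⟨r, ?_⟩
    intro F hF v hv w hlt hwF
    have ht := hr w v hlt
    obtain ⟨hAF, hFc⟩ := hA F hF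
    have hwA : w ∉ A := fun h => hwF (hAF h)
    have hvA : v ∉ A := by
      intro hvA
      rw [if_pos hvA, if_neg hwA] at ht
      split_ifs at ht <;> omega
    have hvU : v ∈ U := Finset.mem_sup.mpr ⟨F, hF, hv⟩
    have hwU : w ∈ U := by
      by_contra hwU
      rw [if_neg hwA, if_neg hwU, if_neg hvA, if_pos hvU] at ht
      omega
    obtain ⟨G, hG, hwG⟩ := Finset.mem_sup.mp hwU
    obtain ⟨hAG, hGc⟩ := hA G hG
    -- G = insert w A
    have hGA : (G \ A).card = 1 := by rw [Finset.card_sdiff_of_subset hAG]; omega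
    have hwGA : w ∈ G \ A := Finset.mem_sdiff.mpr ⟨hwG, hwA⟩
    have hGAw : G \ A = {w} := by
      obtain ⟨a, ha⟩ := Finset.card_eq_one.mp hGA
      rw [ha] at hwGA ⊢
      rw [Finset.mem_singleton.mp hwGA]
    have hGeq : G = insert w A := by
      rw [← Finset.sdiff_union_of_subset hAG, hGAw]
      ext x; simp [or_comm]
    -- F = insert v A
    have hFA : (F \ A).card = 1 := by rw [Finset.card_sdiff_of_subset hAF]; omega
    have hvFA : v ∈ F \ A := Finset.mem_sdiff.mpr ⟨hv, hvA⟩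
    have hFAv : F \ A = {v} := by
      obtain ⟨a, ha⟩ := Finset.card_eq_one.mp hFA
      rw [ha] at hvFA ⊢
      rw [Finset.mem_singleton.mp hvFA]
    have hFeq : F = insert v A := by
      rw [← Finset.sdiff_union_of_subset hAF, hFAv]
      ext x; simp [or_comm]
    have herase : F.erase v = A := by
      rw [hFeq, Finset.erase_insert hvA]
    rw [herase, ← hGeq]
    exact hG
  · -- (k+1)-set case
    set Y := B.filter (fun y => B.erase y ∈ S) with hY
    obtain ⟨r, hr⟩ := exists_mono_order n
      (fun x => if x ∈ Y then 1 else if x ∈ B then 0 else 2)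
    refine ⟨r, ?_⟩
    intro F hF v hv w hlt hwF
    have ht := hr w v hlt
    obtain ⟨hFB, hBc⟩ := hB F hF
    have hvB : v ∈ B := hFB hv
    -- B \ F = {y}
    have hBF : (B \ F).card = 1 := by rw [Finset.card_sdiff_of_subset hFB]; omega
    obtain ⟨y, hy⟩ := Finset.card_eq_one.mp hBF
    have hyB : y ∈ B := by
      have : y ∈ B \ F := hy ▸ Finset.mem_singleton_self y
      exact (Finset.mem_sdiff.mp this).1
    have hyF : y ∉ F := by
      have : y ∈ B \ F := hy ▸ Finset.mem_singleton_self y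
      exact (Finset.mem_sdiff.mp this).2
    have hFeq : F = B.erase y := by
      rw [Finset.erase_eq, ← hy, Finset.sdiff_sdiff_eq_self hFB]
    have hyY : y ∈ Y := Finset.mem_filter.mpr ⟨hyB, by rw [← hFeq]; exact hF⟩
    -- w ∈ B
    have hwB : w ∈ B := by
      by_contra hwB
      have hwY : w ∉ Y := fun h => hwB (Finset.mem_filter.mp h).1
      rw [if_neg hwY, if_neg hwB] at ht
      split_ifs at ht <;> omega
    have hwy : w = y := by
      have : w ∈ B \ F := Finset.mem_sdiff.mpr ⟨hwB, hwF⟩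
      rw [hy, Finset.mem_singleton] at this
      exact this
    have hvY : v ∈ Y := by
      by_contra hvY
      rw [hwy, if_pos hyY, if_neg hvY, if_pos hvB] at ht
      omega
    have hvS : B.erase v ∈ S := (Finset.mem_filter.mp hvY).2
    have hyv : y ≠ v := fun h => hyF (h ▸ hv)
    have : insert w (F.erase v) = B.erase v := by
      rw [hwy, hFeq]
      ext x
      simp only [Finset.mem_insert, Finset.mem_erase]
      constructor
      · rintro (rfl | ⟨hxv, hxy, hxB⟩)
        · exact ⟨hyv, hyB⟩
        · exact ⟨hxv, hxB⟩
      · rintro ⟨hxv, hxB⟩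
        by_cases hxy : x = y
        · exact Or.inl hxy
        · exact Or.inr ⟨hxv, hxy, hxB⟩
    rw [this]
    exact hvS
end
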